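/- arXiv:1805.07956 — 12 statements merged into one kernel-verified Lean document; each statement's English description precedes it below -/
import Mathlib

section
/- The operator T^π_κ v = (I - κγP^π)^{-1}(r^π + (1-κ)γ P^π v) is a ξ_κ-contraction in the max norm, where ξ_κ = γ(1-κ)/(1-γκ), and its unique fixed point is v^π = (I-γP^π)^{-1} r^π. -/
def IsStochastic {n : ℕ} (P : Matrix (Fin n) (Fin n) ℝ) : Prop :=
  (∀ i j, 0 ≤ P i j) ∧ ∀ i, ∑ j, P i j = 1

lemma stoch_mulVec_norm_le {n : ℕ} {P : Matrix (Fin n) (Fin n) ℝ} (hP : IsStochastic P)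
    (x : Fin n → ℝ) : ‖P.mulVec x‖ ≤ ‖x‖ := by
  rw [pi_norm_le_iff_of_nonneg (norm_nonneg x)]
  intro i
  have h : |∑ j, P i j * x j| ≤ ∑ j, P i j * ‖x‖ := by
    calc |∑ j, P i j * x j| ≤ ∑ j, |P i j * x j| := Finset.abs_sum_le_sum_abs _ _
      _ ≤ ∑ j, P i j * ‖x‖ := by
          apply Finset.sum_le_sum; intro j _
          rw [abs_mul, abs_of_nonneg (hP.1 i j)]
          exact mul_le_mul_of_nonneg_left (norm_le_pi_norm x j) (hP.1 i j)
  have h2 : ∑ j, P i j * ‖x‖ = ‖x‖ := by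
    rw [← Finset.sum_mul, hP.2 i, one_mul]
  simpa [Matrix.mulVec, dotProduct, Real.norm_eq_abs, h2] using h

lemma stoch_isUnit_det {n : ℕ} {P : Matrix (Fin n) (Fin n) ℝ} (hP : IsStochastic P)
    {c : ℝ} (hc0 : 0 ≤ c) (hc1 : c < 1) : IsUnit (1 - c • P).det := by
  rw [isUnit_iff_ne_zero]
  intro hdet
  obtain ⟨v, hv0, hv⟩ := (Matrix.exists_mulVec_eq_zero_iff).2 hdet
  rw [Matrix.sub_mulVec, Matrix.one_mulVec, Matrix.smul_mulVec] at hv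
  have hvv : v = c • P.mulVec v := by
    have := sub_eq_zero.mp hv; exact this
  have h1 : ‖v‖ = c * ‖P.mulVec v‖ := by
    rw [hvv, norm_smul, Real.norm_eq_abs, abs_of_nonneg hc0]
    rw [← hvv]
  have h2 : ‖P.mulVec v‖ ≤ ‖v‖ := stoch_mulVec_norm_le hP v
  have hvpos : 0 < ‖v‖ := norm_pos_iff.mpr hv0
  nlinarith

/-- `T^π_κ v = (I - κγP^π)⁻¹ (r^π + (1-κ)γ P^π v)` is a `ξ_κ`-contraction in the max norm,
with `ξ_κ = γ(1-κ)/(1-γκ)`, and its unique fixed point is `v^π = (I - γP^π)⁻¹ r^π`. -/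
theorem stmt1 {n : ℕ} (γ κ : ℝ) (hγ : γ ∈ Set.Ioo (0:ℝ) 1) (hκ : κ ∈ Set.Icc (0:ℝ) 1)
    (P : Matrix (Fin n) (Fin n) ℝ) (hP : IsStochastic P) (r : Fin n → ℝ) :
    let T : (Fin n → ℝ) → (Fin n → ℝ) :=
      fun v => (1 - (κ * γ) • P)⁻¹.mulVec (r + ((1 - κ) * γ) • P.mulVec v)
    let ξ : ℝ := γ * (1 - κ) / (1 - γ * κ)
    let vπ : Fin n → ℝ := (1 - γ • P)⁻¹.mulVec r
    (∀ v w : Fin n → ℝ, ‖T v - T w‖ ≤ ξ * ‖v - w‖) ∧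
    T vπ = vπ ∧ ∀ v, T v = v → v = vπ := by
  obtain ⟨hγ0, hγ1⟩ := hγ
  obtain ⟨hκ0, hκ1⟩ := hκ
  intro T ξ vπ
  have hκγ0 : 0 ≤ κ * γ := mul_nonneg hκ0 hγ0.le
  have hκγ1 : κ * γ < 1 := lt_of_le_of_lt (by nlinarith) hγ1
  have hpos : 0 < 1 - γ * κ := by nlinarith
  set A : Matrix (Fin n) (Fin n) ℝ := 1 - (κ * γ) • P with hAdef
  have hA : IsUnit A.det := stoch_isUnit_det hP hκγ0 hκγ1
  have hG : IsUnit ((1 : Matrix (Fin n) (Fin n) ℝ) - γ • P).det :=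
    stoch_isUnit_det hP hγ0.le hγ1
  have hAinv : ∀ y, A.mulVec (A⁻¹.mulVec y) = y := by
    intro y
    rw [Matrix.mulVec_mulVec, Matrix.mul_nonsing_inv _ hA, Matrix.one_mulVec]
  have hAinv2 : ∀ y, A⁻¹.mulVec (A.mulVec y) = y := by
    intro y
    rw [Matrix.mulVec_mulVec, Matrix.nonsing_inv_mul _ hA, Matrix.one_mulVec]
  -- key bound
  have hbound : ∀ x : Fin n → ℝ, ‖A⁻¹.mulVec (((1 - κ) * γ) • P.mulVec x)‖ ≤ ξ * ‖x‖ := by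
    intro x
    set u : Fin n → ℝ := A⁻¹.mulVec (((1 - κ) * γ) • P.mulVec x) with hu
    have hAu : A.mulVec u = ((1 - κ) * γ) • P.mulVec x := hAinv _
    have hsub : u - (κ * γ) • P.mulVec u = ((1 - κ) * γ) • P.mulVec x := by
      rw [← hAu, hAdef, Matrix.sub_mulVec, Matrix.one_mulVec, Matrix.smul_mulVec]
    have h1 : ‖u‖ - κ * γ * ‖P.mulVec u‖ ≤ ‖u - (κ * γ) • P.mulVec u‖ := by
      have := norm_sub_norm_le u ((κ * γ) • P.mulVec u)
      rw [norm_smul, Real.norm_eq_abs, abs_of_nonneg hκγ0] at this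
      linarith
    have h2 : ‖((1 - κ) * γ) • P.mulVec x‖ ≤ (1 - κ) * γ * ‖x‖ := by
      rw [norm_smul, Real.norm_eq_abs, abs_of_nonneg (by nlinarith : (0:ℝ) ≤ (1 - κ) * γ)]
      exact mul_le_mul_of_nonneg_left (stoch_mulVec_norm_le hP x) (by nlinarith)
    have h3 : ‖P.mulVec u‖ ≤ ‖u‖ := stoch_mulVec_norm_le hP u
    have h4 : ‖u‖ - κ * γ * ‖u‖ ≤ (1 - κ) * γ * ‖x‖ := by
      rw [hsub] at h1
      nlinarith
    show ‖u‖ ≤ γ * (1 - κ) / (1 - γ * κ) * ‖x‖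
    rw [div_mul_eq_mul_div, le_div_iff₀ hpos]
    nlinarith
  refine ⟨?_, ?_, ?_⟩
  · intro v w
    have hTvw : T v - T w = A⁻¹.mulVec (((1 - κ) * γ) • P.mulVec (v - w)) := by
      show A⁻¹.mulVec _ - A⁻¹.mulVec _ = _
      rw [← Matrix.mulVec_sub]
      rw [add_sub_add_left_eq_sub, ← smul_sub, Matrix.mulVec_sub]
    rw [hTvw]
    exact hbound (v - w)
  · -- fixed point
    have hGv : (1 - γ • P).mulVec vπ = r := by
      show (1 - γ • P).mulVec ((1 - γ • P)⁻¹.mulVec r) = r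
      rw [Matrix.mulVec_mulVec, Matrix.mul_nonsing_inv _ hG, Matrix.one_mulVec]
    rw [Matrix.sub_mulVec, Matrix.one_mulVec, Matrix.smul_mulVec] at hGv
    have key : r + ((1 - κ) * γ) • P.mulVec vπ = A.mulVec vπ := by
      rw [hAdef, Matrix.sub_mulVec, Matrix.one_mulVec, Matrix.smul_mulVec]
      funext i
      have h := congrFun hGv i
      simp only [Pi.add_apply, Pi.sub_apply, Pi.smul_apply, smul_eq_mul] at h ⊢
      linear_combination -h
    show A⁻¹.mulVec (r + ((1 - κ) * γ) • P.mulVec vπ) = vπ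
    rw [key, hAinv2]
  · -- uniqueness
    intro v hv
    have hAv : A.mulVec v = r + ((1 - κ) * γ) • P.mulVec v := by
      conv_lhs => rw [← hv]
      exact hAinv _
    rw [hAdef, Matrix.sub_mulVec, Matrix.one_mulVec, Matrix.smul_mulVec] at hAv
    have hGv : (1 - γ • P).mulVec v = r := by
      rw [Matrix.sub_mulVec, Matrix.one_mulVec, Matrix.smul_mulVec]
      funext i
      have h := congrFun hAv i
      simp only [Pi.add_apply, Pi.sub_apply, Pi.smul_apply, smul_eq_mul] at h ⊢
      linear_combination h
    show v = (1 - γ • P)⁻¹.mulVec r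
    rw [← hGv, Matrix.mulVec_mulVec, Matrix.nonsing_inv_mul _ hG, Matrix.one_mulVec]
end

section
/- For any policy π, κ ∈ [0,1], and step-size α with κ ≤ α ≤ 1, if π_κ is a κ-greedy policy w.r.t. v^π (i.e., T^{π_κ}_κ v^π = T_κ v^π ≥ v^π), then the value of the mixture policy π(α,κ) = (1-α)π + απ_κ satisfies v^{π(α,κ)} ≥ v^π component-wise. Specifically, v^{π(α,κ)} - v^π = α(I + γ(I - γP^{π(α,κ)})^{-1}((1-α)P^π + (α-κ)P^{π_κ}))(T^{π_κ}_κ v^π - v^π), and all factors are component-wise nonnegative when α ≥ κ. -/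
/-- Key monotonicity: if `(1 - c•P) y ≥ 0` with `P` stochastic and `0 ≤ c < 1`, then `y ≥ 0`. -/
lemma nonneg_of_mulVec_nonneg {n : ℕ} {c : ℝ} (hc0 : 0 ≤ c) (hc1 : c < 1)
    {P : Matrix (Fin n) (Fin n) ℝ} (hP : IsStochastic P) {y : Fin n → ℝ}
    (h : 0 ≤ (1 - c • P).mulVec y) : 0 ≤ y := by
  intro j
  rcases isEmpty_or_nonempty (Fin n) with hn | hn
  · exact hn.elim j
  obtain ⟨i, -, hi⟩ := Finset.exists_min_image Finset.univ y ⟨j, Finset.mem_univ j⟩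
  have hi' : ∀ k, y i ≤ y k := fun k => hi k (Finset.mem_univ k)
  have hSi : y i ≤ ∑ k, P i k * y k := by
    calc y i = ∑ k, P i k * y i := by rw [← Finset.sum_mul, hP.2 i, one_mul]
    _ ≤ ∑ k, P i k * y k :=
      Finset.sum_le_sum fun k _ => mul_le_mul_of_nonneg_left (hi' k) (hP.1 i k)
  have hPy : P.mulVec y i = ∑ k, P i k * y k := rfl
  have hcomp : 0 ≤ y i - c * ∑ k, P i k * y k := by
    have := h i
    simpa [Matrix.sub_mulVec, Matrix.one_mulVec, Matrix.smul_mulVec,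
      Pi.sub_apply, Pi.smul_apply, smul_eq_mul, hPy] using this
  have hyi : 0 ≤ y i := by nlinarith [mul_le_mul_of_nonneg_left hSi hc0]
  exact le_trans hyi (hi' j)

lemma isUnit_det_one_sub {n : ℕ} {c : ℝ} (hc0 : 0 ≤ c) (hc1 : c < 1)
    {P : Matrix (Fin n) (Fin n) ℝ} (hP : IsStochastic P) :
    IsUnit (1 - c • P).det := by
  rw [← Matrix.isUnit_iff_isUnit_det, ← Matrix.mulVec_injective_iff_isUnit]
  intro y z hyz
  have key : ∀ y z : Fin n → ℝ, (1 - c • P).mulVec y = (1 - c • P).mulVec z → z ≤ y := by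
    intro y z hyz
    have h0 : 0 ≤ (1 - c • P).mulVec (y - z) := by
      rw [Matrix.mulVec_sub, hyz, sub_self]
    have := nonneg_of_mulVec_nonneg hc0 hc1 hP h0
    intro k; have := this k; simpa [sub_nonneg] using this
  exact le_antisymm (key z y hyz.symm) (key y z hyz)

lemma mulVec_nonneg {n : ℕ} {P : Matrix (Fin n) (Fin n) ℝ} (hP : ∀ i j, 0 ≤ P i j)
    {y : Fin n → ℝ} (hy : 0 ≤ y) : 0 ≤ P.mulVec y := by
  intro i
  simp only [Matrix.mulVec, dotProduct, Pi.zero_apply]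
  exact Finset.sum_nonneg fun k _ => mul_nonneg (hP i k) (hy k)

/-- If `π_κ` is κ-greedy w.r.t. `v^π` (i.e. `T^{π_κ}_κ v^π ≥ v^π`) and `κ ≤ α ≤ 1`, then the
mixture policy `π(α,κ) = (1-α)π + απ_κ` improves on `π`:
`v^{π(α,κ)} - v^π = α (I + γ(I-γP^{π(α,κ)})⁻¹((1-α)P^π + (α-κ)P^{π_κ})) (T^{π_κ}_κ v^π - v^π)`
and `v^{π(α,κ)} ≥ v^π` component-wise. -/
theorem stmt4 {n : ℕ} (γ κ α : ℝ) (hγ : γ ∈ Set.Ioo (0:ℝ) 1) (hκ : κ ∈ Set.Icc (0:ℝ) 1)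
    (hα : α ∈ Set.Icc κ 1)
    (Pπ Pκ : Matrix (Fin n) (Fin n) ℝ) (hPπ : IsStochastic Pπ) (hPκ : IsStochastic Pκ)
    (rπ rκ : Fin n → ℝ)
    (vπ : Fin n → ℝ) (hvπ : rπ + γ • Pπ.mulVec vπ = vπ)
    (hgreedy : vπ ≤ (1 - (κ*γ) • Pκ)⁻¹.mulVec (rκ + ((1-κ)*γ) • Pκ.mulVec vπ)) :
    let Pmix : Matrix (Fin n) (Fin n) ℝ := (1-α) • Pπ + α • Pκ
    let rmix : Fin n → ℝ := (1-α) • rπ + α • rκ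
    let vmix : Fin n → ℝ := (1 - γ • Pmix)⁻¹.mulVec rmix
    let Tκvπ : Fin n → ℝ := (1 - (κ*γ) • Pκ)⁻¹.mulVec (rκ + ((1-κ)*γ) • Pκ.mulVec vπ)
    vmix - vπ
      = α • ((1 + γ • ((1 - γ • Pmix)⁻¹ * ((1-α) • Pπ + (α-κ) • Pκ))).mulVec (Tκvπ - vπ))
    ∧ vπ ≤ vmix := by
  obtain ⟨hγ0, hγ1⟩ := hγ
  obtain ⟨hκ0, hκ1⟩ := hκ
  obtain ⟨hκα, hα1⟩ := hα
  have hα0 : 0 ≤ α := le_trans hκ0 hκα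
  intro Pmix rmix vmix Tκvπ
  -- stochasticity of the mixture
  have hPmix : IsStochastic Pmix := by
    constructor
    · intro i j
      have := hPπ.1 i j; have := hPκ.1 i j
      simp only [Pmix, Matrix.add_apply, Matrix.smul_apply, smul_eq_mul]
      nlinarith
    · intro i
      simp only [Pmix, Matrix.add_apply, Matrix.smul_apply, smul_eq_mul]
      rw [Finset.sum_add_distrib, ← Finset.mul_sum, ← Finset.mul_sum, hPπ.2 i, hPκ.2 i]
      ring
  have hκγ0 : 0 ≤ κ * γ := mul_nonneg hκ0 (le_of_lt hγ0)
  have hκγ1 : κ * γ < 1 := lt_of_le_of_lt (by nlinarith) hγ1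
  set M : Matrix (Fin n) (Fin n) ℝ := 1 - γ • Pmix with hMdef
  set A : Matrix (Fin n) (Fin n) ℝ := 1 - (κ*γ) • Pκ with hAdef
  set B : Matrix (Fin n) (Fin n) ℝ := (1-α) • Pπ + (α-κ) • Pκ with hBdef
  have hMu : IsUnit M.det := isUnit_det_one_sub (le_of_lt hγ0) hγ1 hPmix
  have hAu : IsUnit A.det := isUnit_det_one_sub hκγ0 hκγ1 hPκ
  set w : Fin n → ℝ := Tκvπ - vπ with hwdef
  have hw0 : 0 ≤ w := fun i => by
    have := hgreedy i; simp only [hwdef, Pi.sub_apply]; simpa [sub_nonneg, Tκvπ] using this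
  -- A * Tκvπ = rκ + (1-κ)γ Pκ vπ
  have hATκ : A.mulVec Tκvπ = rκ + ((1-κ)*γ) • Pκ.mulVec vπ := by
    show A.mulVec (A⁻¹.mulVec _) = _
    rw [Matrix.mulVec_mulVec, Matrix.mul_nonsing_inv _ hAu, Matrix.one_mulVec]
  -- M * vmix = rmix
  have hMvmix : M.mulVec vmix = rmix := by
    show M.mulVec (M⁻¹.mulVec _) = _
    rw [Matrix.mulVec_mulVec, Matrix.mul_nonsing_inv _ hMu, Matrix.one_mulVec]
  -- M (vmix - vπ) = α • A w
  have hkey : M.mulVec (vmix - vπ) = α • A.mulVec w := by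
    rw [Matrix.mulVec_sub, hMvmix, hwdef, Matrix.mulVec_sub, hATκ]
    funext i
    have hr : rπ i = vπ i - γ * Pπ.mulVec vπ i := by
      have := congrFun hvπ i; simp only [Pi.add_apply, Pi.smul_apply, smul_eq_mul] at this
      linarith
    simp only [rmix, Pmix, hMdef, hAdef, Pi.sub_apply, Pi.add_apply, Pi.smul_apply, smul_eq_mul,
      Matrix.sub_mulVec, Matrix.one_mulVec, Matrix.add_mulVec, Matrix.smul_mulVec, hr]
    ring
  -- vmix - vπ = α • (M⁻¹ * A) w
  have hstep : vmix - vπ = α • (M⁻¹ * A).mulVec w := by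
    have : M⁻¹.mulVec (M.mulVec (vmix - vπ)) = vmix - vπ := by
      rw [Matrix.mulVec_mulVec, Matrix.nonsing_inv_mul _ hMu, Matrix.one_mulVec]
    rw [← this, hkey, Matrix.mulVec_smul, Matrix.mulVec_mulVec]
  -- M⁻¹ * A = 1 + γ • (M⁻¹ * B)
  have hAMB : A = M + γ • B := by
    simp only [hAdef, hMdef, hBdef, Pmix, smul_add, smul_smul]
    ext i j
    simp only [Matrix.sub_apply, Matrix.add_apply, Matrix.smul_apply, smul_eq_mul]
    ring
  have hMA : M⁻¹ * A = 1 + γ • (M⁻¹ * B) := by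
    rw [hAMB, Matrix.mul_add, Matrix.nonsing_inv_mul _ hMu, Matrix.mul_smul]
  have heq : vmix - vπ = α • ((1 + γ • (M⁻¹ * B)).mulVec w) := by rw [hstep, hMA]
  refine ⟨heq, ?_⟩
  -- nonnegativity
  have hB0 : ∀ i j, 0 ≤ B i j := by
    intro i j
    have := hPπ.1 i j; have := hPκ.1 i j
    simp only [hBdef, Matrix.add_apply, Matrix.smul_apply, smul_eq_mul]
    nlinarith [sub_nonneg.mpr hα1, sub_nonneg.mpr hκα]
  have hBw : 0 ≤ B.mulVec w := mulVec_nonneg hB0 hw0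
  have hMBw : 0 ≤ (M⁻¹ * B).mulVec w := by
    rw [← Matrix.mulVec_mulVec]
    refine nonneg_of_mulVec_nonneg (le_of_lt hγ0) hγ1 hPmix ?_
    rwa [← hMdef, Matrix.mulVec_mulVec, Matrix.mul_nonsing_inv _ hMu, Matrix.one_mulVec]
  rw [← sub_nonneg, heq]
  intro i
  simp only [Pi.smul_apply, Pi.zero_apply, Pi.add_apply, smul_eq_mul, Matrix.add_mulVec,
    Matrix.one_mulVec, Matrix.smul_mulVec]
  have h1 := hw0 i
  have h2 := hMBw i
  have h3 : (0:ℝ) ≤ γ * (M⁻¹ * B).mulVec w i := mul_nonneg (le_of_lt hγ0) h2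
  nlinarith [mul_nonneg hα0 (add_nonneg h1 h3)]
end

section
/- There exists an MDP, a policy π, κ ∈ (0,1], a κ-greedy policy π_κ w.r.t. v^π, and α ∈ (0,κ) such that the mixture policy π(α,κ) = (1-α)π + απ_κ satisfies v^{π(α,κ)}(s) < v^π(s) for some state s (monotonic improvement fails for α < κ). -/
/-- A finite MDP with `ns` states and `na` actions. -/
structure FinMDP (ns na : ℕ) where
  P : Fin ns → Fin na → Fin ns → ℝ
  r : Fin ns → Fin na → ℝ
  P_nonneg : ∀ s a s', 0 ≤ P s a s'
  P_sum : ∀ s a, ∑ s', P s a s' = 1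

/-- A stochastic policy. -/
def IsPolicy {ns na : ℕ} (π : Fin ns → Fin na → ℝ) : Prop :=
  (∀ s a, 0 ≤ π s a) ∧ ∀ s, ∑ a, π s a = 1

/-- Transition matrix induced by a policy. -/
def Pmat {ns na : ℕ} (M : FinMDP ns na) (π : Fin ns → Fin na → ℝ) :
    Matrix (Fin ns) (Fin ns) ℝ :=
  Matrix.of fun s s' => ∑ a, π s a * M.P s a s'

/-- Reward vector induced by a policy. -/
def rvec {ns na : ℕ} (M : FinMDP ns na) (π : Fin ns → Fin na → ℝ) : Fin ns → ℝ :=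
  fun s => ∑ a, π s a * M.r s a

/-- Value of a policy: `v^π = (I - γ P^π)⁻¹ r^π`. -/
noncomputable def value {ns na : ℕ} (M : FinMDP ns na) (γ : ℝ)
    (π : Fin ns → Fin na → ℝ) : Fin ns → ℝ :=
  (1 - γ • Pmat M π)⁻¹.mulVec (rvec M π)

/-- `T^π_κ v = (I - κγP^π)⁻¹ (r^π + (1-κ)γ P^π v)`. -/
noncomputable def Tkappa {ns na : ℕ} (M : FinMDP ns na) (γ κ : ℝ)
    (π : Fin ns → Fin na → ℝ) (v : Fin ns → ℝ) : Fin ns → ℝ :=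
  (1 - (κ*γ) • Pmat M π)⁻¹.mulVec (rvec M π + ((1-κ)*γ) • (Pmat M π).mulVec v)

/-!
For `κ = 1` the operator `T^π_κ v` no longer depends on `v` and equals `v^π`, so the `1`-greedy
policy is simply an optimal one. In the tightrope MDP the optimal policy walks to `s₂`, while the
hesitant policy `π₀` stays in `s₀` with value `0`. The mixture `(1-α)π₀ + απ*` eventually reaches
`s₁` but then falls into the trap `s₃` with probability `1-α`, so its value at `s₁` has the sign of
`α - (1-α)c`, and the value at `s₀` drops below `0` as soon as `α/(1-α) < c`. Values are computed
by checking the Bellman equation, which characterises `v^π` because `I - γP^π` is strictly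
diagonally dominant.
-/

open Matrix

theorem Matrix.det_one_sub_smul_ne_zero_of_stochastic {n : Type*} [Fintype n] [DecidableEq n]
    {P : Matrix n n ℝ} (hP : ∀ i j, 0 ≤ P i j) (hP1 : ∀ i, ∑ j, P i j = 1)
    {γ : ℝ} (hγ : 0 ≤ γ) (hγ1 : γ < 1) : (1 - γ • P).det ≠ 0 := by
  refine det_ne_zero_of_sum_row_lt_diag fun k => ?_
  have hdiag : P k k ≤ 1 := hP1 k ▸ Finset.single_le_sum (fun j _ => hP k j) (Finset.mem_univ k)
  have hoff : ∑ j ∈ Finset.univ.erase k, ‖(1 - γ • P) k j‖ = γ * (1 - P k k) := by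
    rw [← hP1 k, ← Finset.sum_erase_eq_sub (Finset.mem_univ k), Finset.mul_sum]
    refine Finset.sum_congr rfl fun j hj => ?_
    rw [sub_apply, one_apply_ne (Finset.ne_of_mem_erase hj).symm, smul_apply, smul_eq_mul,
      zero_sub, norm_neg, Real.norm_of_nonneg (mul_nonneg hγ (hP k j))]
  rw [hoff, sub_apply, one_apply_eq, smul_apply, smul_eq_mul,
    Real.norm_of_nonneg (by nlinarith)]
  linarith

namespace FinMDP
variable {ns na : ℕ} (M : FinMDP ns na) {π : Fin ns → Fin na → ℝ}

theorem Pmat_nonneg (hπ : IsPolicy π) (s s' : Fin ns) : 0 ≤ Pmat M π s s' := by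
  rw [Pmat, of_apply]
  exact Finset.sum_nonneg fun a _ => mul_nonneg (hπ.1 s a) (M.P_nonneg s a s')

theorem sum_Pmat (hπ : IsPolicy π) (s : Fin ns) : ∑ s', Pmat M π s s' = 1 := by
  simp only [Pmat, of_apply]
  rw [Finset.sum_comm]
  simp only [← Finset.mul_sum, M.P_sum, mul_one, hπ.2]

theorem value_eq_of_bellman {γ : ℝ} (hγ : 0 ≤ γ) (hγ1 : γ < 1) (hπ : IsPolicy π)
    {w : Fin ns → ℝ} (hw : w = rvec M π + γ • Pmat M π *ᵥ w) : value M γ π = w := by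
  have hdet : IsUnit (1 - γ • Pmat M π).det :=
    (det_one_sub_smul_ne_zero_of_stochastic (M.Pmat_nonneg hπ) (M.sum_Pmat hπ) hγ hγ1).isUnit
  have hr : rvec M π = (1 - γ • Pmat M π) *ᵥ w := by
    rw [sub_mulVec, one_mulVec, smul_mulVec]
    exact eq_sub_of_add_eq hw.symm
  rw [value, hr, mulVec_mulVec, nonsing_inv_mul _ hdet, one_mulVec]

theorem Tkappa_one (γ : ℝ) (π : Fin ns → Fin na → ℝ) (v : Fin ns → ℝ) :
    Tkappa M γ 1 π v = value M γ π := by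
  simp [Tkappa, value]

end FinMDP

theorem IsPolicy.const_single {ns na : ℕ} (a : Fin na) :
    IsPolicy (fun (_ : Fin ns) => (Pi.single a 1 : Fin na → ℝ)) :=
  ⟨fun _ b => by by_cases h : b = a <;> simp [h], fun _ => by simp⟩

theorem IsPolicy.mix {ns na : ℕ} {π π' : Fin ns → Fin na → ℝ} (hπ : IsPolicy π)
    (hπ' : IsPolicy π') {α : ℝ} (hα0 : 0 ≤ α) (hα1 : α ≤ 1) :
    IsPolicy (fun s a => (1 - α) * π s a + α * π' s a) :=
  ⟨fun s a => by nlinarith [hπ.1 s a, hπ'.1 s a],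
   fun s => by simp [Finset.sum_add_distrib, ← Finset.mul_sum, hπ.2, hπ'.2]⟩

theorem IsPolicy.le_one {ns na : ℕ} {π : Fin ns → Fin na → ℝ} (hπ : IsPolicy π)
    (s : Fin ns) (a : Fin na) : π s a ≤ 1 :=
  hπ.2 s ▸ Finset.single_le_sum (fun b _ => hπ.1 s b) (Finset.mem_univ a)

def FinMDP.ofDeterministic {ns na : ℕ} (next : Fin ns → Fin na → Fin ns)
    (r : Fin ns → Fin na → ℝ) : FinMDP ns na where
  P s a s' := if next s a = s' then 1 else 0
  r := r
  P_nonneg s a s' := by split_ifs <;> norm_num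
  P_sum s a := by simp

theorem FinMDP.Pmat_ofDeterministic_mulVec {ns na : ℕ} (next : Fin ns → Fin na → Fin ns)
    (r : Fin ns → Fin na → ℝ) (π : Fin ns → Fin na → ℝ) (w : Fin ns → ℝ) :
    Pmat (ofDeterministic next r) π *ᵥ w = fun s => ∑ a, π s a * w (next s a) := by
  ext s
  simp only [mulVec, dotProduct, Pmat, ofDeterministic, of_apply, mul_ite, mul_one, mul_zero,
    Finset.sum_mul, ite_mul, zero_mul]
  rw [Finset.sum_comm]
  simp

namespace Tightrope

def next : Fin 4 → Fin 2 → Fin 4 := ![![0, 1], ![3, 2], ![2, 2], ![3, 3]]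

def mdp (c : ℝ) : FinMDP 4 2 := FinMDP.ofDeterministic next fun s _ => ![0, 0, 1, -c] s

-- `value₁` is the value at `s₁`; `q` and `p` are the probabilities of `a₁` at `s₀` and `s₁`.
noncomputable def value₁ (γ c p : ℝ) : ℝ := γ * (p - (1 - p) * c) / (1 - γ)

noncomputable def closedFormValue (γ c q p : ℝ) : Fin 4 → ℝ :=
  ![γ * q * value₁ γ c p / (1 - γ + γ * q), value₁ γ c p, 1 / (1 - γ), -c / (1 - γ)]

variable {γ c : ℝ}

theorem value_mdp (hγ0 : 0 < γ) (hγ1 : γ < 1) {π : Fin 4 → Fin 2 → ℝ} (hπ : IsPolicy π) :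
    value (mdp c) γ π = closedFormValue γ c (π 0 1) (π 1 1) := by
  refine FinMDP.value_eq_of_bellman _ hγ0.le hγ1 hπ ?_
  have hsum (s : Fin 4) : π s 0 = 1 - π s 1 := by
    have := hπ.2 s; rw [Fin.sum_univ_two] at this; linarith
  have hγ : 1 - γ ≠ 0 := by linarith
  have hq : 1 - γ + γ * π 0 1 ≠ 0 := by nlinarith [hπ.1 0 1]
  rw [mdp, FinMDP.Pmat_ofDeterministic_mulVec]
  ext s
  fin_cases s <;>
    simp [rvec, FinMDP.ofDeterministic, closedFormValue, value₁, next, Fin.sum_univ_two, hsum] <;>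
    field_simp <;> ring

theorem value₁_le (hγ0 : 0 ≤ γ) (hγ1 : γ < 1) (hc : 0 ≤ c) {p : ℝ} (hp : p ≤ 1) :
    value₁ γ c p ≤ value₁ γ c 1 := by
  unfold value₁
  gcongr

theorem closedFormValue_le_optimal (hγ0 : 0 < γ) (hγ1 : γ < 1) (hc : 0 ≤ c) {q p : ℝ}
    (hq0 : 0 ≤ q) (hq1 : q ≤ 1) (hp : p ≤ 1) :
    closedFormValue γ c q p ≤ closedFormValue γ c 1 1 := by
  have hv := value₁_le hγ0.le hγ1 hc hp
  have hv1 : value₁ γ c 1 = γ / (1 - γ) := by simp [value₁]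
  have hvpos : 0 < value₁ γ c 1 := hv1 ▸ div_pos hγ0 (by linarith)
  intro s
  fin_cases s
  · have hd : 0 < 1 - γ + γ * q := by nlinarith
    simp only [closedFormValue, Fin.zero_eta, cons_val_zero, mul_one, sub_add_cancel, div_one]
    rw [div_le_iff₀ hd]
    nlinarith [mul_le_mul_of_nonneg_left hv (mul_nonneg hγ0.le hq0),
      mul_nonneg (mul_nonneg hγ0.le hvpos.le) (mul_nonneg (sub_nonneg.2 hγ1.le) (sub_nonneg.2 hq1))]
  · simpa [closedFormValue] using hv
  all_goals simp [closedFormValue]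

theorem closedFormValue_lt_of_mul_one_add_lt (hγ0 : 0 < γ) (hγ1 : γ < 1) {α : ℝ} (hα : 0 < α)
    (hαc : α * (1 + c) < c) : closedFormValue γ c α α 0 < closedFormValue γ c 0 0 0 := by
  have hv : value₁ γ c α < 0 := by
    unfold value₁
    exact div_neg_of_neg_of_pos (by nlinarith) (by linarith)
  have hd : 0 < 1 - γ + γ * α := by nlinarith
  simp only [closedFormValue, cons_val_zero, mul_zero, zero_mul, zero_div]
  exact div_neg_of_neg_of_pos (mul_neg_of_pos_of_neg (by positivity) hv) hd

end Tightrope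

/-- There exist an MDP, a policy `π`, `κ ∈ (0,1]`, a κ-greedy policy `π_κ` w.r.t. `v^π`, and a
stepsize `α ∈ (0,κ)` such that the mixture `π(α,κ) = (1-α)π + απ_κ` is strictly worse than `π`
at some state: monotonic improvement fails for `α < κ`. -/
theorem stmt5 :
    ∃ (ns na : ℕ) (M : FinMDP ns na) (γ κ α : ℝ) (π πκ : Fin ns → Fin na → ℝ),
      γ ∈ Set.Ioo (0:ℝ) 1 ∧ κ ∈ Set.Ioc (0:ℝ) 1 ∧ α ∈ Set.Ioo 0 κ ∧
      IsPolicy π ∧ IsPolicy πκ ∧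
      (∀ π' : Fin ns → Fin na → ℝ, IsPolicy π' →
        Tkappa M γ κ π' (value M γ π) ≤ Tkappa M γ κ πκ (value M γ π)) ∧
      ∃ s : Fin ns,
        value M γ (fun s a => (1-α) * π s a + α * πκ s a) s < value M γ π s := by
  have hγ0 : (0 : ℝ) < 1 / 2 := by norm_num
  have hγ1 : (1 : ℝ) / 2 < 1 := by norm_num
  have hesitant := IsPolicy.const_single (ns := 4) (0 : Fin 2)
  have optimal := IsPolicy.const_single (ns := 4) (1 : Fin 2)
  refine ⟨4, 2, Tightrope.mdp 2, 1 / 2, 1, 1 / 2, _, _, ⟨hγ0, hγ1⟩, by norm_num, by norm_num,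
    hesitant, optimal, fun π' hπ' => ?_, 0, ?_⟩
  · simp only [FinMDP.Tkappa_one, Tightrope.value_mdp hγ0 hγ1 hπ',
      Tightrope.value_mdp hγ0 hγ1 optimal]
    exact Tightrope.closedFormValue_le_optimal hγ0 hγ1 (by norm_num) (hπ'.1 0 1)
      (hπ'.le_one 0 1) (hπ'.le_one 1 1)
  · rw [Tightrope.value_mdp hγ0 hγ1 (hesitant.mix optimal hγ0.le hγ1.le),
      Tightrope.value_mdp hγ0 hγ1 hesitant]
    simpa using Tightrope.closedFormValue_lt_of_mul_one_add_lt hγ0 hγ1 hγ0 (c := 2) (by norm_num)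
end

section
/- In the Tightrope Walking MDP, the value of the mixture policy π(α) = (1-α)π_0 + απ* satisfies v^{π(α)}(s_1) = γ(-c(1-α)+α)/(1-γ) and v^{π(α)}(s_0) = (γα/(1-γ(1-α))) · v^{π(α)}(s_1). In particular, if c > α/(1-α) with α ∈ (0,1), then v^{π(α)}(s_0) < 0 = v^{π_0}(s_0). -/
lemma inv_mulVec_eq' {M : Matrix (Fin 4) (Fin 4) ℝ} {w r : Fin 4 → ℝ}
    (hdet : IsUnit M.det) (hw : M.mulVec w = r) : M⁻¹.mulVec r = w := by
  rw [← hw, Matrix.mulVec_mulVec, Matrix.nonsing_inv_mul M hdet, Matrix.one_mulVec]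

/-- In the Tightrope Walking MDP (states `s0,s1,s2,s3 = 0,1,2,3`), the mixture policy
`π(α) = (1-α)π_0 + απ*` has value
`v^{π(α)}(s_1) = γ(-c(1-α)+α)/(1-γ)` and `v^{π(α)}(s_0) = (γα/(1-γ(1-α))) v^{π(α)}(s_1)`;
in particular, if `c > α/(1-α)` with `α ∈ (0,1)` then `v^{π(α)}(s_0) < 0 = v^{π_0}(s_0)`. -/
theorem stmt6 (γ c α : ℝ) (hγ : γ ∈ Set.Ioo (0:ℝ) 1) (hc : 0 < c)
    (hα : α ∈ Set.Ioo (0:ℝ) 1) :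
    let Pmix : Matrix (Fin 4) (Fin 4) ℝ :=
      Matrix.of ![![1-α, α, 0, 0], ![0, 0, α, 1-α], ![0, 0, 1, 0], ![0, 0, 0, 1]]
    let P0 : Matrix (Fin 4) (Fin 4) ℝ :=
      Matrix.of ![![1, 0, 0, 0], ![0, 0, 0, 1], ![0, 0, 1, 0], ![0, 0, 0, 1]]
    let r : Fin 4 → ℝ := ![0, 0, 1, -c]
    let v : Fin 4 → ℝ := (1 - γ • Pmix)⁻¹.mulVec r
    let v0 : Fin 4 → ℝ := (1 - γ • P0)⁻¹.mulVec r
    v 1 = γ * (-c * (1-α) + α) / (1-γ) ∧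
    v 0 = (γ * α / (1 - γ * (1-α))) * v 1 ∧
    (c > α / (1-α) → v 0 < 0 ∧ v0 0 = 0) := by
  obtain ⟨hγ0, hγ1⟩ := hγ
  obtain ⟨hα0, hα1⟩ := hα
  intro Pmix P0 r v v0
  have hg : (1:ℝ) - γ ≠ 0 := by linarith
  have hga : (1:ℝ) - γ * (1-α) ≠ 0 := by nlinarith
  set w : Fin 4 → ℝ :=
    ![(γ * α / (1 - γ * (1-α))) * (γ * (-c * (1-α) + α) / (1-γ)),
      γ * (-c * (1-α) + α) / (1-γ), 1/(1-γ), -c/(1-γ)] with hwdef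
  set w0 : Fin 4 → ℝ := ![0, -γ*c/(1-γ), 1/(1-γ), -c/(1-γ)] with hw0def
  have hM : (1 - γ • Pmix) =
      !![1-γ*(1-α), -(γ*α), 0, 0; 0, 1, -(γ*α), -(γ*(1-α)); 0, 0, 1-γ, 0; 0, 0, 0, 1-γ] := by
    ext i j
    fin_cases i <;> fin_cases j <;>
      simp [Pmix, Matrix.one_apply, Matrix.smul_apply, Matrix.vecHead, Matrix.vecTail]
    all_goals ring
  have hM0 : (1 - γ • P0) =
      !![1-γ, 0, 0, 0; 0, 1, 0, -γ; 0, 0, 1-γ, 0; 0, 0, 0, 1-γ] := by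
    ext i j
    fin_cases i <;> fin_cases j <;>
      simp [P0, Matrix.one_apply, Matrix.smul_apply, Matrix.vecHead, Matrix.vecTail]
    all_goals ring
  have hdet : IsUnit (1 - γ • Pmix).det := by
    have : (1 - γ • Pmix).det = (1 - γ*(1-α)) * ((1-γ) * (1-γ)) := by
      rw [hM]
      simp [Matrix.det_succ_row_zero, Fin.sum_univ_succ]
      try ring
    rw [this]
    exact (IsUnit.mul (Ne.isUnit hga) (Ne.isUnit (mul_ne_zero hg hg)))
  have hdet0 : IsUnit (1 - γ • P0).det := by
    have : (1 - γ • P0).det = (1-γ) * ((1-γ) * (1-γ)) := by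
      rw [hM0]
      simp [Matrix.det_succ_row_zero, Fin.sum_univ_succ]
      try ring
    rw [this]
    exact Ne.isUnit (mul_ne_zero hg (mul_ne_zero hg hg))
  have hmw : (1 - γ • Pmix).mulVec w = r := by
    rw [hM]
    funext i
    fin_cases i <;>
      simp [w, r, Matrix.mulVec, dotProduct, Fin.sum_univ_four]
    all_goals field_simp
    all_goals ring
  have hmw0 : (1 - γ • P0).mulVec w0 = r := by
    rw [hM0]
    funext i
    fin_cases i <;>
      simp [w0, r, Matrix.mulVec, dotProduct, Fin.sum_univ_four]
    all_goals field_simp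
    all_goals ring
  have hv : v = w := inv_mulVec_eq' hdet hmw
  have hv0 : v0 = w0 := inv_mulVec_eq' hdet0 hmw0
  rw [hv, hv0]
  refine ⟨rfl, rfl, fun hcα => ⟨?_, rfl⟩⟩
  have h1 : c * (1-α) > α := by
    have := (div_lt_iff₀ (by linarith : (0:ℝ) < 1-α)).mp hcα
    linarith
  have hv1 : γ * (-c * (1-α) + α) / (1-γ) < 0 := by
    apply div_neg_of_neg_of_pos
    · nlinarith
    · linarith
  show (γ * α / (1 - γ * (1-α))) * (γ * (-c * (1-α) + α) / (1-γ)) < 0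
  apply mul_neg_of_pos_of_neg _ hv1
  apply div_pos (by nlinarith)
  nlinarith
end

section
/- The coupled operator H^π_κ(q, q_κ)(s,a) = (r(s,a) + γ E_{s'∼P(·|s,a), a'∼π(s')}[q(s',a')], r(s,a) + γ(1-κ) E_{s',a'∼π}[q(s',a')] + κγ E_{s'}[max_{a'} q_κ(s',a')]) is a γ-contraction on ℝ^{2|S||A|} with respect to the max norm. -/
lemma avg_abs_le {n : ℕ} (w f : Fin n → ℝ) (hw : ∀ i, 0 ≤ w i)
    (hsum : ∑ i, w i = 1) (C : ℝ) (hf : ∀ i, |f i| ≤ C) :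
    |∑ i, w i * f i| ≤ C := by
  calc |∑ i, w i * f i| ≤ ∑ i, |w i * f i| := Finset.abs_sum_le_sum_abs _ _
    _ = ∑ i, w i * |f i| := by
        refine Finset.sum_congr rfl fun i _ => ?_
        rw [abs_mul, abs_of_nonneg (hw i)]
    _ ≤ ∑ i, w i * C := Finset.sum_le_sum fun i _ =>
        mul_le_mul_of_nonneg_left (hf i) (hw i)
    _ = C := by rw [← Finset.sum_mul, hsum, one_mul]

lemma sup_diff_le {n : ℕ} (hn : 0 < n) (f g : Fin n → ℝ) (C : ℝ)
    (h : ∀ a, |f a - g a| ≤ C) : |(⨆ a, f a) - ⨆ a, g a| ≤ C := by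
  have : Nonempty (Fin n) := ⟨⟨0, hn⟩⟩
  rw [abs_le]
  constructor
  · have : (⨆ a, g a) ≤ (⨆ a, f a) + C := by
      refine ciSup_le fun a => ?_
      have h1 := (abs_le.1 (h a)).1
      have h2 := le_ciSup (Set.Finite.bddAbove (Set.finite_range f)) a
      linarith
    linarith
  · have : (⨆ a, f a) ≤ (⨆ a, g a) + C := by
      refine ciSup_le fun a => ?_
      have h1 := (abs_le.1 (h a)).2
      have h2 := le_ciSup (Set.Finite.bddAbove (Set.finite_range g)) a
      linarith
    linarith

/-- The coupled operator `H^π_κ` on pairs `(q, q_κ)` of state-action value functions is a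
`γ`-contraction w.r.t. the max norm (the sup norm over all entries of both components). -/
theorem stmt7 {ns na : ℕ} (hna : 0 < na) (γ κ : ℝ) (hγ : γ ∈ Set.Ioo (0:ℝ) 1)
    (hκ : κ ∈ Set.Icc (0:ℝ) 1)
    (P : Fin ns → Fin na → Fin ns → ℝ)
    (hP : ∀ s a, (∀ s', 0 ≤ P s a s') ∧ ∑ s', P s a s' = 1)
    (r : Fin ns → Fin na → ℝ)
    (π : Fin ns → Fin na → ℝ) (hπ : IsPolicy π) :
    let H : ((Fin ns × Fin na → ℝ) × (Fin ns × Fin na → ℝ)) →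
            ((Fin ns × Fin na → ℝ) × (Fin ns × Fin na → ℝ)) :=
      fun Q =>
        (fun sa => r sa.1 sa.2 +
            γ * ∑ s', P sa.1 sa.2 s' * ∑ a', π s' a' * Q.1 (s', a'),
         fun sa => r sa.1 sa.2 +
            γ * (1-κ) * ∑ s', P sa.1 sa.2 s' * ∑ a', π s' a' * Q.1 (s', a') +
            κ * γ * ∑ s', P sa.1 sa.2 s' * (⨆ a' : Fin na, Q.2 (s', a')))
    ∀ Q₁ Q₂, ‖H Q₁ - H Q₂‖ ≤ γ * ‖Q₁ - Q₂‖ := by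
  intro H Q₁ Q₂
  obtain ⟨hγ0, hγ1⟩ := hγ
  obtain ⟨hκ0, hκ1⟩ := hκ
  obtain ⟨hπ0, hπ1⟩ := hπ
  set D := ‖Q₁ - Q₂‖ with hD
  have hD0 : 0 ≤ D := norm_nonneg _
  have hq1 : ∀ sa, |Q₁.1 sa - Q₂.1 sa| ≤ D := by
    intro sa
    have h1 : ‖(Q₁ - Q₂).1 sa‖ ≤ ‖(Q₁ - Q₂).1‖ := norm_le_pi_norm _ sa
    have h2 : ‖(Q₁ - Q₂).1‖ ≤ D := norm_fst_le _
    simpa [Real.norm_eq_abs] using h1.trans h2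
  have hq2 : ∀ sa, |Q₁.2 sa - Q₂.2 sa| ≤ D := by
    intro sa
    have h1 : ‖(Q₁ - Q₂).2 sa‖ ≤ ‖(Q₁ - Q₂).2‖ := norm_le_pi_norm _ sa
    have h2 : ‖(Q₁ - Q₂).2‖ ≤ D := norm_snd_le _
    simpa [Real.norm_eq_abs] using h1.trans h2
  -- bound for the policy-averaged term
  have hA : ∀ s a, |(∑ s', P s a s' * ∑ a', π s' a' * Q₁.1 (s', a')) -
      (∑ s', P s a s' * ∑ a', π s' a' * Q₂.1 (s', a'))| ≤ D := by
    intro s a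
    have heq : (∑ s', P s a s' * ∑ a', π s' a' * Q₁.1 (s', a')) -
        (∑ s', P s a s' * ∑ a', π s' a' * Q₂.1 (s', a')) =
        ∑ s', P s a s' * ∑ a', π s' a' * (Q₁.1 (s', a') - Q₂.1 (s', a')) := by
      rw [← Finset.sum_sub_distrib]
      refine Finset.sum_congr rfl fun s' _ => ?_
      rw [← mul_sub, ← Finset.sum_sub_distrib]
      congr 1
      refine Finset.sum_congr rfl fun a' _ => ?_
      ring
    rw [heq]
    refine avg_abs_le _ _ (hP s a).1 (hP s a).2 D fun s' => ?_
    exact avg_abs_le _ _ (hπ0 s') (hπ1 s') D fun a' => hq1 (s', a')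
  -- bound for the sup term
  have hB : ∀ s a, |(∑ s', P s a s' * (⨆ a' : Fin na, Q₁.2 (s', a'))) -
      (∑ s', P s a s' * (⨆ a' : Fin na, Q₂.2 (s', a')))| ≤ D := by
    intro s a
    have heq : (∑ s', P s a s' * (⨆ a' : Fin na, Q₁.2 (s', a'))) -
        (∑ s', P s a s' * (⨆ a' : Fin na, Q₂.2 (s', a'))) =
        ∑ s', P s a s' * ((⨆ a' : Fin na, Q₁.2 (s', a')) - ⨆ a' : Fin na, Q₂.2 (s', a')) := by
      rw [← Finset.sum_sub_distrib]
      refine Finset.sum_congr rfl fun s' _ => ?_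
      rw [← mul_sub]
    rw [heq]
    refine avg_abs_le _ _ (hP s a).1 (hP s a).2 D fun s' => ?_
    exact sup_diff_le hna _ _ D fun a' => hq2 (s', a')
  have key : ∀ sa : Fin ns × Fin na,
      |(H Q₁ - H Q₂).1 sa| ≤ γ * D ∧ |(H Q₁ - H Q₂).2 sa| ≤ γ * D := by
    intro sa
    constructor
    · have : (H Q₁ - H Q₂).1 sa = γ * ((∑ s', P sa.1 sa.2 s' * ∑ a', π s' a' * Q₁.1 (s', a')) -
          (∑ s', P sa.1 sa.2 s' * ∑ a', π s' a' * Q₂.1 (s', a'))) := by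
        simp only [H, Prod.fst_sub, Pi.sub_apply]
        ring
      rw [this, abs_mul, abs_of_pos hγ0]
      exact mul_le_mul_of_nonneg_left (hA sa.1 sa.2) hγ0.le
    · have : (H Q₁ - H Q₂).2 sa =
          γ * (1-κ) * ((∑ s', P sa.1 sa.2 s' * ∑ a', π s' a' * Q₁.1 (s', a')) -
            (∑ s', P sa.1 sa.2 s' * ∑ a', π s' a' * Q₂.1 (s', a'))) +
          κ * γ * ((∑ s', P sa.1 sa.2 s' * (⨆ a' : Fin na, Q₁.2 (s', a'))) -
            (∑ s', P sa.1 sa.2 s' * (⨆ a' : Fin na, Q₂.2 (s', a')))) := by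
        simp only [H, Prod.snd_sub, Pi.sub_apply]
        ring
      rw [this]
      have h1 : |γ * (1-κ) * ((∑ s', P sa.1 sa.2 s' * ∑ a', π s' a' * Q₁.1 (s', a')) -
            (∑ s', P sa.1 sa.2 s' * ∑ a', π s' a' * Q₂.1 (s', a')))| ≤ γ * (1-κ) * D := by
        rw [abs_mul, abs_of_nonneg (mul_nonneg hγ0.le (by linarith))]
        exact mul_le_mul_of_nonneg_left (hA sa.1 sa.2)
          (mul_nonneg hγ0.le (by linarith))
      have h2 : |κ * γ * ((∑ s', P sa.1 sa.2 s' * (⨆ a' : Fin na, Q₁.2 (s', a'))) -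
            (∑ s', P sa.1 sa.2 s' * (⨆ a' : Fin na, Q₂.2 (s', a'))))| ≤ κ * γ * D := by
        rw [abs_mul, abs_of_nonneg (mul_nonneg hκ0 hγ0.le)]
        exact mul_le_mul_of_nonneg_left (hB sa.1 sa.2) (mul_nonneg hκ0 hγ0.le)
      calc _ ≤ _ := abs_add_le _ _
        _ ≤ γ * (1-κ) * D + κ * γ * D := add_le_add h1 h2
        _ = γ * D := by ring
  have hγD : 0 ≤ γ * D := mul_nonneg hγ0.le hD0
  rw [Prod.norm_def]
  refine max_le ?_ ?_ <;>
    refine (pi_norm_le_iff_of_nonneg hγD).2 fun sa => ?_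
  · simpa [Real.norm_eq_abs] using (key sa).1
  · simpa [Real.norm_eq_abs] using (key sa).2
end

section
/- The fixed point of the coupled operator H^π_κ is the pair (q^π, q^π_κ), where q^π is the action-value function of π in the γ-discounted MDP and q^π_κ is the optimal action-value function of the surrogate κγ-discounted MDP with shaped reward r(s,a) + γ(1-κ) E_{s'∼P(·|s,a)}[v^π(s')]. -/
/-!
The averaged action values `∑ₐ π(a|s) q^π(s,a)` are `r^π + γ P^π v^π`, which is `v^π` by the
Bellman equation of `v^π`; that equation holds because `1 - γ P^π` is invertible, the
row-stochastic matrix `P^π` having `ℓ^∞` operator norm at most `1`. Substituting `v^π` for the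
averages turns both components of `H^π_κ (q^π, q^π_κ)` into their defining equations.
-/

open Finset Matrix

namespace Matrix

attribute [local instance] Matrix.linftyOpNormedAddCommGroup Matrix.linftyOpNormedRing
  Matrix.linftyOpNormedAlgebra

variable {n : Type*} [Fintype n] [DecidableEq n] {A : Matrix n n ℝ}

lemma linfty_opNorm_le_one_of_mem_rowStochastic (hA : A ∈ rowStochastic ℝ n) : ‖A‖ ≤ 1 := by
  rw [linfty_opNorm_def, ← NNReal.coe_one, NNReal.coe_le_coe]
  refine Finset.sup_le fun i _ => ?_
  rw [← NNReal.coe_le_coe, NNReal.coe_sum, NNReal.coe_one]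
  simp only [coe_nnnorm, Real.norm_eq_abs, abs_of_nonneg (nonneg_of_mem_rowStochastic hA)]
  exact (sum_row_of_mem_rowStochastic hA i).le

lemma isUnit_one_sub_smul_of_mem_rowStochastic (hA : A ∈ rowStochastic ℝ n) {γ : ℝ}
    (hγ : |γ| < 1) : IsUnit (1 - γ • A) := by
  refine isUnit_one_sub_of_norm_lt_one ?_
  calc ‖γ • A‖ ≤ ‖γ‖ * ‖A‖ := norm_smul_le γ A
    _ ≤ |γ| * 1 := by
        rw [Real.norm_eq_abs]
        exact mul_le_mul_of_nonneg_left (linfty_opNorm_le_one_of_mem_rowStochastic hA)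
          (abs_nonneg γ)
    _ < 1 := by rwa [mul_one]

end Matrix

section FinMDP

variable {ns na : ℕ} (M : FinMDP ns na) {π : Fin ns → Fin na → ℝ}

lemma Pmat_mem_rowStochastic (hπ : IsPolicy π) : Pmat M π ∈ rowStochastic ℝ (Fin ns) := by
  refine mem_rowStochastic_iff_sum.mpr ⟨fun s s' => ?_, fun s => ?_⟩ <;>
    simp only [Pmat, of_apply]
  · exact sum_nonneg fun a _ => mul_nonneg (hπ.1 s a) (M.P_nonneg s a s')
  · rw [sum_comm]
    simp_rw [← mul_sum, M.P_sum, mul_one]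
    exact hπ.2 s

lemma sum_policy_mul_backup (γ : ℝ) (v : Fin ns → ℝ) (s : Fin ns) :
    ∑ a, π s a * (M.r s a + γ * ∑ s', M.P s a s' * v s') =
      rvec M π s + γ * (Pmat M π *ᵥ v) s := by
  simp only [rvec, Pmat, mulVec, dotProduct, of_apply, mul_add, sum_add_distrib,
    sum_mul, mul_sum]
  congr 1
  rw [sum_comm]
  exact sum_congr rfl fun a _ => sum_congr rfl fun s' _ => by ring

lemma value_eq_rvec_add_smul_mulVec (hπ : IsPolicy π) {γ : ℝ} (hγ : |γ| < 1) :
    value M γ π = rvec M π + γ • (Pmat M π *ᵥ value M γ π) := by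
  have hunit := isUnit_one_sub_smul_of_mem_rowStochastic (Pmat_mem_rowStochastic M hπ) hγ
  have hsolve : (1 - γ • Pmat M π) *ᵥ value M γ π = rvec M π := by
    rw [value, mulVec_mulVec, mul_nonsing_inv _ ((isUnit_iff_isUnit_det _).mp hunit), one_mulVec]
  rwa [sub_mulVec, one_mulVec, smul_mulVec, sub_eq_iff_eq_add] at hsolve

lemma sum_policy_mul_backup_value (hπ : IsPolicy π) {γ : ℝ} (hγ : |γ| < 1) (s : Fin ns) :
    ∑ a, π s a * (M.r s a + γ * ∑ s', M.P s a s' * value M γ π s') = value M γ π s := by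
  rw [sum_policy_mul_backup, congrFun (value_eq_rvec_add_smul_mulVec M hπ hγ) s]
  rfl

end FinMDP

theorem stmt8_general {ns na : ℕ} (γ κ : ℝ) (hγ : γ ∈ Set.Ioo (0:ℝ) 1)
    (M : FinMDP ns na)
    (π : Fin ns → Fin na → ℝ) (hπ : IsPolicy π)
    (qκ : Fin ns × Fin na → ℝ)
    (hqκ : ∀ sa : Fin ns × Fin na,
      qκ sa = M.r sa.1 sa.2 + γ * (1-κ) * ∑ s', M.P sa.1 sa.2 s' * value M γ π s'
        + κ * γ * ∑ s', M.P sa.1 sa.2 s' * (⨆ a' : Fin na, qκ (s', a'))) :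
    let qπ : Fin ns × Fin na → ℝ :=
      fun sa => M.r sa.1 sa.2 + γ * ∑ s', M.P sa.1 sa.2 s' * value M γ π s'
    let H : ((Fin ns × Fin na → ℝ) × (Fin ns × Fin na → ℝ)) →
            ((Fin ns × Fin na → ℝ) × (Fin ns × Fin na → ℝ)) :=
      fun Q =>
        (fun sa => M.r sa.1 sa.2 +
            γ * ∑ s', M.P sa.1 sa.2 s' * ∑ a', π s' a' * Q.1 (s', a'),
         fun sa => M.r sa.1 sa.2 +
            γ * (1-κ) * ∑ s', M.P sa.1 sa.2 s' * ∑ a', π s' a' * Q.1 (s', a') +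
            κ * γ * ∑ s', M.P sa.1 sa.2 s' * (⨆ a' : Fin na, Q.2 (s', a')))
    H (qπ, qκ) = (qπ, qκ) := by
  intro qπ H
  have hγ' : |γ| < 1 := abs_lt.mpr ⟨by linarith [hγ.1], hγ.2⟩
  have hmean : ∀ s', ∑ a', π s' a' * qπ (s', a') = value M γ π s' :=
    sum_policy_mul_backup_value M hπ hγ'
  refine Prod.ext (funext fun sa => ?_) (funext fun sa => ?_)
  · simp only [H, hmean, qπ]
  · simp only [H, hmean]
    exact (hqκ sa).symm

/-- The fixed point of the coupled operator `H^π_κ` is `(q^π, q^π_κ)`, where `q^π` is the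
action-value function of `π` and `q^π_κ` is the optimal action-value function of the surrogate
`κγ`-discounted MDP with shaped reward `r(s,a) + γ(1-κ) E_{s'}[v^π(s')]` (characterized by its
Bellman optimality equation). -/
theorem stmt8 {ns na : ℕ} (hna : 0 < na) (γ κ : ℝ) (hγ : γ ∈ Set.Ioo (0:ℝ) 1)
    (hκ : κ ∈ Set.Icc (0:ℝ) 1) (M : FinMDP ns na)
    (π : Fin ns → Fin na → ℝ) (hπ : IsPolicy π)
    (qκ : Fin ns × Fin na → ℝ)
    (hqκ : ∀ sa : Fin ns × Fin na,
      qκ sa = M.r sa.1 sa.2 + γ * (1-κ) * ∑ s', M.P sa.1 sa.2 s' * value M γ π s'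
        + κ * γ * ∑ s', M.P sa.1 sa.2 s' * (⨆ a' : Fin na, qκ (s', a'))) :
    let qπ : Fin ns × Fin na → ℝ :=
      fun sa => M.r sa.1 sa.2 + γ * ∑ s', M.P sa.1 sa.2 s' * value M γ π s'
    let H : ((Fin ns × Fin na → ℝ) × (Fin ns × Fin na → ℝ)) →
            ((Fin ns × Fin na → ℝ) × (Fin ns × Fin na → ℝ)) :=
      fun Q =>
        (fun sa => M.r sa.1 sa.2 +
            γ * ∑ s', M.P sa.1 sa.2 s' * ∑ a', π s' a' * Q.1 (s', a'),
         fun sa => M.r sa.1 sa.2 +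
            γ * (1-κ) * ∑ s', M.P sa.1 sa.2 s' * ∑ a', π s' a' * Q.1 (s', a') +
            κ * γ * ∑ s', M.P sa.1 sa.2 s' * (⨆ a' : Fin na, Q.2 (s', a')))
    H (qπ, qκ) = (qπ, qκ) :=
  stmt8_general γ κ hγ M π hπ qκ hqκ
end

section
/- The value function is Lipschitz in the policy: for any two stochastic policies π_1, π_2 on a finite MDP with rewards bounded by R_max, ‖v^{π_1} - v^{π_2}‖_∞ ≤ (R_max / (1-γ)^2) · ‖π_1 - π_2‖_∞, where ‖π_1 - π_2‖_∞ = max_s Σ_a |π_1(a|s) - π_2(a|s)|. -/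
/-!
With `q₂ s a = r s a + γ Σ_{s'} P s a s' v₂ s'` the action values of `π₂`, the two Bellman
equations give `v₁ - v₂ = Σ_a (π₁ - π₂) q₂ + γ P^{π₁} (v₁ - v₂)`. The fixed point `v₂` has
`‖v₂‖ ≤ R_max / (1 - γ)`, hence `|q₂| ≤ R_max / (1 - γ)`, and `P^{π₁}` is stochastic, so
`‖v₁ - v₂‖ ≤ ‖π₁ - π₂‖ R_max / (1 - γ) + γ ‖v₁ - v₂‖`, which rearranges to the bound.
-/

open Finset

section WeightedSums

variable {ι : Type*} [Fintype ι]

lemma abs_sum_mul_le_sum_abs_mul {c x : ι → ℝ} {B : ℝ} (hx : ∀ i, |x i| ≤ B) :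
    |∑ i, c i * x i| ≤ (∑ i, |c i|) * B :=
  calc |∑ i, c i * x i| ≤ ∑ i, |c i| * |x i| := by
        simpa only [abs_mul] using abs_sum_le_sum_abs (fun i => c i * x i) univ
    _ ≤ ∑ i, |c i| * B := by gcongr with i; exact hx i
    _ = (∑ i, |c i|) * B := (sum_mul ..).symm

lemma abs_sum_mul_le_of_stochastic {c x : ι → ℝ} {B : ℝ} (hc : ∀ i, 0 ≤ c i)
    (hc₁ : ∑ i, c i = 1) (hx : ∀ i, |x i| ≤ B) : |∑ i, c i * x i| ≤ B := by
  simpa only [abs_of_nonneg (hc _), hc₁, one_mul] using abs_sum_mul_le_sum_abs_mul (c := c) hx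

lemma abs_apply_le_norm (x : ι → ℝ) (i : ι) : |x i| ≤ ‖x‖ :=
  (Real.norm_eq_abs _).symm.trans_le (norm_le_pi_norm x i)

lemma norm_le_div_one_sub_of_abs_le {x : ι → ℝ} {a γ : ℝ} (ha : 0 ≤ a) (hγ₀ : 0 ≤ γ)
    (hγ₁ : γ < 1) (hx : ∀ i, |x i| ≤ a + γ * ‖x‖) : ‖x‖ ≤ a / (1 - γ) := by
  have : ‖x‖ ≤ a + γ * ‖x‖ := (pi_norm_le_iff_of_nonneg (by positivity)).2 fun i =>
    (Real.norm_eq_abs _).trans_le (hx i)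
  rw [le_div_iff₀ (by linarith)]
  linarith

end WeightedSums

namespace FinMDP

variable {ns na : ℕ} (M : FinMDP ns na) {γ Rmax : ℝ}

def qval (γ : ℝ) (v : Fin ns → ℝ) (s : Fin ns) (a : Fin na) : ℝ :=
  M.r s a + γ * ∑ s', M.P s a s' * v s'

lemma bellman_apply (π : Fin ns → Fin na → ℝ) (γ : ℝ) (v : Fin ns → ℝ) (s : Fin ns) :
    (rvec M π + γ • (Pmat M π).mulVec v) s = ∑ a, π s a * M.qval γ v s a := by
  simp only [Pi.add_apply, Pi.smul_apply, smul_eq_mul, rvec, Pmat, qval, Matrix.mulVec,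
    dotProduct, Matrix.of_apply, mul_add, sum_add_distrib, mul_sum, sum_mul]
  rw [sum_comm (f := fun s' a => γ * (π s a * M.P s a s' * v s'))]
  congr 1
  exact sum_congr rfl fun a _ => sum_congr rfl fun s' _ => by ring

lemma abs_sum_P_mul_le (v : Fin ns → ℝ) (s : Fin ns) (a : Fin na) :
    |∑ s', M.P s a s' * v s'| ≤ ‖v‖ :=
  abs_sum_mul_le_of_stochastic (M.P_nonneg s a) (M.P_sum s a) (abs_apply_le_norm v)

lemma abs_qval_le (hγ₀ : 0 ≤ γ) (hR : ∀ s a, |M.r s a| ≤ Rmax) (v : Fin ns → ℝ)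
    (s : Fin ns) (a : Fin na) : |M.qval γ v s a| ≤ Rmax + γ * ‖v‖ :=
  calc |M.qval γ v s a| ≤ |M.r s a| + γ * |∑ s', M.P s a s' * v s'| := by
        simpa only [qval, abs_mul, abs_of_nonneg hγ₀] using
          abs_add_le (M.r s a) (γ * ∑ s', M.P s a s' * v s')
    _ ≤ Rmax + γ * ‖v‖ := by gcongr; exacts [hR s a, M.abs_sum_P_mul_le v s a]

lemma qval_sub_qval (γ : ℝ) (v₁ v₂ : Fin ns → ℝ) (s : Fin ns) (a : Fin na) :
    M.qval γ v₁ s a - M.qval γ v₂ s a = γ * ∑ s', M.P s a s' * (v₁ - v₂) s' := by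
  simp only [qval, Pi.sub_apply, mul_sub, sum_sub_distrib]
  ring

lemma norm_le_of_bellman_eq (hR : ∀ s a, |M.r s a| ≤ Rmax) (hRmax : 0 ≤ Rmax)
    (hγ₀ : 0 ≤ γ) (hγ₁ : γ < 1) {π : Fin ns → Fin na → ℝ} (hπ : IsPolicy π)
    {v : Fin ns → ℝ} (hv : rvec M π + γ • (Pmat M π).mulVec v = v) :
    ‖v‖ ≤ Rmax / (1 - γ) :=
  norm_le_div_one_sub_of_abs_le hRmax hγ₀ hγ₁ fun s => by
    rw [← congrFun hv s, bellman_apply]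
    exact abs_sum_mul_le_of_stochastic (hπ.1 s) (hπ.2 s) (M.abs_qval_le hγ₀ hR v s)

lemma abs_qval_le_of_bellman_eq (hR : ∀ s a, |M.r s a| ≤ Rmax) (hRmax : 0 ≤ Rmax)
    (hγ₀ : 0 ≤ γ) (hγ₁ : γ < 1) {π : Fin ns → Fin na → ℝ} (hπ : IsPolicy π)
    {v : Fin ns → ℝ} (hv : rvec M π + γ • (Pmat M π).mulVec v = v)
    (s : Fin ns) (a : Fin na) : |M.qval γ v s a| ≤ Rmax / (1 - γ) :=
  calc |M.qval γ v s a| ≤ Rmax + γ * (Rmax / (1 - γ)) :=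
        (M.abs_qval_le hγ₀ hR v s a).trans <| by
          gcongr; exact M.norm_le_of_bellman_eq hR hRmax hγ₀ hγ₁ hπ hv
    _ = Rmax / (1 - γ) := by field_simp [(by linarith : (1 - γ) ≠ 0)]; ring

lemma abs_sub_le_of_bellman_eq (hγ₀ : 0 ≤ γ) {π₁ π₂ : Fin ns → Fin na → ℝ}
    (h₁ : IsPolicy π₁) {v₁ v₂ : Fin ns → ℝ}
    (hv₁ : rvec M π₁ + γ • (Pmat M π₁).mulVec v₁ = v₁)
    (hv₂ : rvec M π₂ + γ • (Pmat M π₂).mulVec v₂ = v₂) {B : ℝ}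
    (hq : ∀ s a, |M.qval γ v₂ s a| ≤ B) (s : Fin ns) :
    |v₁ s - v₂ s| ≤ (∑ a, |π₁ s a - π₂ s a|) * B + γ * ‖v₁ - v₂‖ := by
  have hsplit : v₁ s - v₂ s = ∑ a, (π₁ s a - π₂ s a) * M.qval γ v₂ s a
      + ∑ a, π₁ s a * (M.qval γ v₁ s a - M.qval γ v₂ s a) := by
    rw [← congrFun hv₁ s, ← congrFun hv₂ s, bellman_apply, bellman_apply, ← sum_add_distrib,
      ← sum_sub_distrib]
    exact sum_congr rfl fun a _ => by ring
  have hdiff : ∀ a, |M.qval γ v₁ s a - M.qval γ v₂ s a| ≤ γ * ‖v₁ - v₂‖ := fun a => by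
    rw [qval_sub_qval, abs_mul, abs_of_nonneg hγ₀]
    gcongr
    exact M.abs_sum_P_mul_le _ s a
  rw [hsplit]
  exact (abs_add_le _ _).trans (add_le_add (abs_sum_mul_le_sum_abs_mul (hq s))
    (abs_sum_mul_le_of_stochastic (h₁.1 s) (h₁.2 s) hdiff))

end FinMDP

/-- The value function is Lipschitz in the policy:
`‖v^{π₁} - v^{π₂}‖_∞ ≤ (R_max/(1-γ)²) max_s Σ_a |π₁(a|s) - π₂(a|s)|`. -/
theorem stmt9 {ns na : ℕ} (γ Rmax : ℝ) (hγ : γ ∈ Set.Ioo (0:ℝ) 1)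
    (M : FinMDP ns na) (hR : ∀ s a, |M.r s a| ≤ Rmax)
    (π₁ π₂ : Fin ns → Fin na → ℝ) (h₁ : IsPolicy π₁) (h₂ : IsPolicy π₂)
    (v₁ v₂ : Fin ns → ℝ)
    (hv₁ : rvec M π₁ + γ • (Pmat M π₁).mulVec v₁ = v₁)
    (hv₂ : rvec M π₂ + γ • (Pmat M π₂).mulVec v₂ = v₂) :
    ‖v₁ - v₂‖ ≤ Rmax / (1-γ)^2 * (⨆ s : Fin ns, ∑ a, |π₁ s a - π₂ s a|) := by
  obtain ⟨hγ₀, hγ₁⟩ := hγ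
  rcases isEmpty_or_nonempty (Fin ns) with hns | ⟨⟨s₀⟩⟩
  · simp [Subsingleton.elim (v₁ - v₂) 0]
  set Δ := ⨆ s : Fin ns, ∑ a, |π₁ s a - π₂ s a|
  have hRmax : 0 ≤ Rmax :=
    (abs_nonneg _).trans (abs_sum_mul_le_of_stochastic (h₁.1 s₀) (h₁.2 s₀) (hR s₀))
  have hΔ : ∀ s, ∑ a, |π₁ s a - π₂ s a| ≤ Δ := le_ciSup (Set.finite_range _).bddAbove
  have hΔ₀ : 0 ≤ Δ := Real.iSup_nonneg fun s => sum_nonneg fun a _ => abs_nonneg _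
  have hq := M.abs_qval_le_of_bellman_eq hR hRmax hγ₀.le hγ₁ h₂ hv₂
  calc ‖v₁ - v₂‖ ≤ Δ * (Rmax / (1 - γ)) / (1 - γ) :=
        norm_le_div_one_sub_of_abs_le (by positivity) hγ₀.le hγ₁ fun s =>
          (M.abs_sub_le_of_bellman_eq hγ₀.le h₁ hv₁ hv₂ hq s).trans (by gcongr; exact hΔ s)
    _ = Rmax / (1 - γ) ^ 2 * Δ := by field_simp
end

section
/- For any two stochastic policies π_1, π_2, ‖T_κ v^{π_1} - T_κ v^{π_2}‖_∞ ≤ (γ(1-κ)/(1-κγ)) ‖v^{π_1} - v^{π_2}‖_∞, where T_κ v(s) = max_a [r(s,a) + γ(1-κ)Σ_{s'}P(s'|s,a)v(s') + κγΣ_{s'}P(s'|s,a)(T_κ v)(s')] is the optimal value of the surrogate κγ-discounted MDP with v-shaped reward. -/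
lemma row_bound' {ns : ℕ} (p : Fin ns → ℝ) (hp : ∀ s, 0 ≤ p s) (hsum : ∑ s, p s = 1)
    (x : Fin ns → ℝ) : |∑ s, p s * x s| ≤ ‖x‖ := by
  calc |∑ s, p s * x s| ≤ ∑ s, |p s * x s| := Finset.abs_sum_le_sum_abs _ _
    _ = ∑ s, p s * |x s| := by
        refine Finset.sum_congr rfl fun s _ => ?_
        rw [abs_mul, abs_of_nonneg (hp s)]
    _ ≤ ∑ s, p s * ‖x‖ := by
        refine Finset.sum_le_sum fun s _ => ?_
        exact mul_le_mul_of_nonneg_left (by simpa using norm_le_pi_norm x s) (hp s)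
    _ = ‖x‖ := by rw [← Finset.sum_mul, hsum, one_mul]

lemma ciSup_sub_ciSup_le' {na : ℕ} (hna : 0 < na) (f g : Fin na → ℝ) (C : ℝ)
    (h : ∀ a, f a - g a ≤ C) : (⨆ a, f a) - ⨆ a, g a ≤ C := by
  haveI : Nonempty (Fin na) := Fin.pos_iff_nonempty.mp hna
  rw [sub_le_iff_le_add]
  refine ciSup_le fun a => ?_
  have hg := le_ciSup (Finite.bddAbove_range g) a
  linarith [h a]

/-- `‖T_κ v^{π₁} - T_κ v^{π₂}‖_∞ ≤ (γ(1-κ)/(1-κγ)) ‖v^{π₁} - v^{π₂}‖_∞`, where `T_κ v` is the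
optimal value of the surrogate `κγ`-discounted MDP with `v`-shaped reward, characterized as the
unique fixed point of its optimal Bellman operator. -/
theorem stmt10 {ns na : ℕ} (hna : 0 < na) (γ κ : ℝ) (hγ : γ ∈ Set.Ioo (0:ℝ) 1)
    (hκ : κ ∈ Set.Ico (0:ℝ) 1) (M : FinMDP ns na)
    (π₁ π₂ : Fin ns → Fin na → ℝ) (h₁ : IsPolicy π₁) (h₂ : IsPolicy π₂)
    (v₁ v₂ w₁ w₂ : Fin ns → ℝ)
    (hv₁ : rvec M π₁ + γ • (Pmat M π₁).mulVec v₁ = v₁)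
    (hv₂ : rvec M π₂ + γ • (Pmat M π₂).mulVec v₂ = v₂)
    (hw₁ : ∀ s, w₁ s = ⨆ a : Fin na,
      (M.r s a + γ * (1-κ) * ∑ s', M.P s a s' * v₁ s' + κ * γ * ∑ s', M.P s a s' * w₁ s'))
    (hw₂ : ∀ s, w₂ s = ⨆ a : Fin na,
      (M.r s a + γ * (1-κ) * ∑ s', M.P s a s' * v₂ s' + κ * γ * ∑ s', M.P s a s' * w₂ s')) :
    ‖w₁ - w₂‖ ≤ γ * (1-κ) / (1 - κ*γ) * ‖v₁ - v₂‖ := by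
  obtain ⟨hγ0, hγ1⟩ := hγ
  obtain ⟨hκ0, hκ1⟩ := hκ
  set W := ‖w₁ - w₂‖ with hW
  set V := ‖v₁ - v₂‖ with hV
  have hW0 : 0 ≤ W := norm_nonneg _
  have hV0 : 0 ≤ V := norm_nonneg _
  have hκγ : κ * γ < 1 := by nlinarith
  have hcoe : 0 ≤ γ * (1 - κ) := by nlinarith
  have hcoe2 : 0 ≤ κ * γ := by nlinarith
  have key : W ≤ γ * (1 - κ) * V + κ * γ * W := by
    rw [hW]
    rw [pi_norm_le_iff_of_nonneg (by nlinarith)]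
    intro s
    rw [Real.norm_eq_abs, abs_le]
    have hstep : ∀ (u₁ u₂ x₁ x₂ : Fin ns → ℝ)
        (hu : ∀ s, u₁ s = ⨆ a : Fin na,
          (M.r s a + γ * (1-κ) * ∑ s', M.P s a s' * x₁ s' + κ * γ * ∑ s', M.P s a s' * u₁ s'))
        (hu' : ∀ s, u₂ s = ⨆ a : Fin na,
          (M.r s a + γ * (1-κ) * ∑ s', M.P s a s' * x₂ s' + κ * γ * ∑ s', M.P s a s' * u₂ s')),
        u₁ s - u₂ s ≤ γ * (1 - κ) * ‖x₁ - x₂‖ + κ * γ * ‖u₁ - u₂‖ := by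
      intro u₁ u₂ x₁ x₂ hu hu'
      rw [hu s, hu' s]
      refine ciSup_sub_ciSup_le' hna _ _ _ fun a => ?_
      have b1 : |∑ s', M.P s a s' * (x₁ - x₂) s'| ≤ ‖x₁ - x₂‖ :=
        row_bound' _ (M.P_nonneg s a) (M.P_sum s a) _
      have b2 : |∑ s', M.P s a s' * (u₁ - u₂) s'| ≤ ‖u₁ - u₂‖ :=
        row_bound' _ (M.P_nonneg s a) (M.P_sum s a) _
      have e1 : ∑ s', M.P s a s' * (x₁ - x₂) s'
          = (∑ s', M.P s a s' * x₁ s') - ∑ s', M.P s a s' * x₂ s' := by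
        rw [← Finset.sum_sub_distrib]; exact Finset.sum_congr rfl fun s' _ => by
          simp [Pi.sub_apply]; ring
      have e2 : ∑ s', M.P s a s' * (u₁ - u₂) s'
          = (∑ s', M.P s a s' * u₁ s') - ∑ s', M.P s a s' * u₂ s' := by
        rw [← Finset.sum_sub_distrib]; exact Finset.sum_congr rfl fun s' _ => by
          simp [Pi.sub_apply]; ring
      rw [e1] at b1; rw [e2] at b2
      rw [abs_le] at b1 b2
      nlinarith [b1.1, b1.2, b2.1, b2.2]
    constructor
    · have := hstep w₂ w₁ v₂ v₁ hw₂ hw₁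
      rw [show ‖v₂ - v₁‖ = V by rw [hV, norm_sub_rev],
        show ‖w₂ - w₁‖ = W by rw [hW, norm_sub_rev]] at this
      simpa [Pi.sub_apply] using by linarith
    · have := hstep w₁ w₂ v₁ v₂ hw₁ hw₂
      rw [← hV, ← hW] at this
      simpa [Pi.sub_apply] using this
  have h1 : 0 < 1 - κ * γ := by linarith
  rw [div_mul_eq_mul_div, le_div_iff₀ h1]
  nlinarith [key]
end

section
/- (Resolvent interpolation identity) For any policy π, γ ∈ (0,1), κ ∈ [0,1) and κ' ∈ [0,1]: (I - ξ_{κ'} D^π_{κ'} P^π)^{-1} = ((κ'-κ)/(1-κ)) I + ((1-κ')/(1-κ)) (I - ξ_κ D^π_κ P^π)^{-1}, where ξ_κ = γ(1-κ)/(1-γκ) and D^π_κ = (1-κγ)(I - κγP^π)^{-1}. -/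
open Matrix

lemma isUnit_one_sub_smul {n : ℕ} (c : ℝ) (hc0 : 0 ≤ c) (hc1 : c < 1)
    (P : Matrix (Fin n) (Fin n) ℝ)
    (h0 : ∀ i j, 0 ≤ P i j) (h1 : ∀ i, ∑ j, P i j = 1) :
    IsUnit (1 - c • P) := by
  letI : NormedRing (Matrix (Fin n) (Fin n) ℝ) := Matrix.linftyOpNormedRing
  letI : NormedAlgebra ℝ (Matrix (Fin n) (Fin n) ℝ) := Matrix.linftyOpNormedAlgebra
  haveI : CompleteSpace (Matrix (Fin n) (Fin n) ℝ) :=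
    FiniteDimensional.complete ℝ _
  have hnorm : ‖P‖ ≤ 1 := by
    rw [Matrix.linfty_opNorm_def]
    have hsup : ((Finset.univ : Finset (Fin n)).sup fun i => ∑ j, ‖P i j‖₊) ≤ 1 := by
      apply Finset.sup_le
      intro i _
      have : ((∑ j, ‖P i j‖₊ : NNReal) : ℝ) = 1 := by
        push_cast
        rw [← h1 i]
        exact Finset.sum_congr rfl fun j _ => by
          rw [Real.norm_eq_abs, abs_of_nonneg (h0 i j)]
      exact le_of_eq (NNReal.coe_injective (by simpa using this))
    exact_mod_cast hsup
  have hlt : ‖c • P‖ < 1 := by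
    rw [norm_smul, Real.norm_eq_abs, abs_of_nonneg hc0]
    nlinarith [norm_nonneg P]
  exact (Units.oneSub (c • P) hlt).isUnit

lemma key_lemma {n : ℕ} (γ k : ℝ) (hγ : γ ∈ Set.Ioo (0:ℝ) 1)
    (hk : k ∈ Set.Icc (0:ℝ) 1)
    (P : Matrix (Fin n) (Fin n) ℝ)
    (h0 : ∀ i j, 0 ≤ P i j) (h1 : ∀ i, ∑ j, P i j = 1) :
    (1 - (γ * (1-k) / (1 - γ*k)) • ((1 - k*γ) • (1 - (k*γ) • P)⁻¹ * P))⁻¹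
      = k • (1 : Matrix (Fin n) (Fin n) ℝ) + (1-k) • (1 - γ • P)⁻¹ := by
  obtain ⟨hγ0, hγ1⟩ := hγ
  obtain ⟨hk0, hk1⟩ := hk
  have hkγ0 : 0 ≤ k * γ := mul_nonneg hk0 hγ0.le
  have hkγ1 : k * γ < 1 := lt_of_le_of_lt (by nlinarith) hγ1
  have hne : 1 - γ * k ≠ 0 := by rw [mul_comm]; linarith
  have hA : IsUnit (1 - (k*γ) • P) := isUnit_one_sub_smul _ hkγ0 hkγ1 P h0 h1
  have hB : IsUnit (1 - γ • P) := isUnit_one_sub_smul _ hγ0.le hγ1 P h0 h1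
  have hAd : IsUnit (1 - (k*γ) • P).det := (Matrix.isUnit_iff_isUnit_det _).mp hA
  have hBd : IsUnit (1 - γ • P).det := (Matrix.isUnit_iff_isUnit_det _).mp hB
  have hscal : (γ * (1-k) / (1 - γ*k)) • ((1 - k*γ) • (1 - (k*γ) • P)⁻¹ * P)
      = (γ * (1-k)) • ((1 - (k*γ) • P)⁻¹ * P) := by
    rw [Matrix.smul_mul, smul_smul]
    congr 1
    rw [mul_comm k γ]
    exact div_mul_cancel₀ _ hne
  have hfact : 1 - (γ * (1-k) / (1 - γ*k)) • ((1 - k*γ) • (1 - (k*γ) • P)⁻¹ * P)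
      = (1 - (k*γ) • P)⁻¹ * (1 - γ • P) := by
    rw [hscal]
    have : (1 : Matrix (Fin n) (Fin n) ℝ) - γ • P
        = (1 - (k*γ) • P) - (γ * (1-k)) • P := by
      rw [sub_sub, ← add_smul]; congr 2; ring
    rw [this, Matrix.mul_sub, Matrix.nonsing_inv_mul _ hAd, Matrix.mul_smul]
  rw [hfact, Matrix.mul_inv_rev, Matrix.nonsing_inv_nonsing_inv _ hAd]
  have hsplit : (1 : Matrix (Fin n) (Fin n) ℝ) - (k*γ) • P
      = k • (1 - γ • P) + (1-k) • 1 := by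
    rw [smul_sub, smul_smul, sub_smul, one_smul]
    abel
  rw [hsplit, Matrix.mul_add, Matrix.mul_smul, Matrix.mul_smul,
    Matrix.nonsing_inv_mul _ hBd, Matrix.mul_one]

/-- Resolvent interpolation identity:
`(I - ξ_{κ'} D^π_{κ'} P^π)⁻¹ = ((κ'-κ)/(1-κ)) I + ((1-κ')/(1-κ)) (I - ξ_κ D^π_κ P^π)⁻¹`,
with `ξ_κ = γ(1-κ)/(1-γκ)` and `D^π_κ = (1-κγ)(I - κγP^π)⁻¹`, for `κ < 1`. -/
theorem stmt11 {n : ℕ} (γ κ κ' : ℝ) (hγ : γ ∈ Set.Ioo (0:ℝ) 1)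
    (hκ : κ ∈ Set.Ico (0:ℝ) 1) (hκ' : κ' ∈ Set.Icc (0:ℝ) 1)
    (P : Matrix (Fin n) (Fin n) ℝ) (hP : IsStochastic P) :
    let ξ : ℝ → ℝ := fun k => γ * (1-k) / (1 - γ*k)
    let D : ℝ → Matrix (Fin n) (Fin n) ℝ := fun k => (1 - k*γ) • (1 - (k*γ) • P)⁻¹
    (1 - ξ κ' • (D κ' * P))⁻¹
      = ((κ' - κ)/(1-κ)) • (1 : Matrix (Fin n) (Fin n) ℝ)
        + ((1 - κ')/(1-κ)) • (1 - ξ κ • (D κ * P))⁻¹ := by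
  intro ξ D
  obtain ⟨h0, h1⟩ := hP
  have e1 := key_lemma γ κ hγ ⟨hκ.1, hκ.2.le⟩ P h0 h1
  have e2 := key_lemma γ κ' hγ hκ' P h0 h1
  show (1 - (γ * (1-κ') / (1 - γ*κ')) • ((1 - κ'*γ) • (1 - (κ'*γ) • P)⁻¹ * P))⁻¹ = _
  rw [e2]
  show _ = _ + ((1 - κ')/(1-κ)) •
      (1 - (γ * (1-κ) / (1 - γ*κ)) • ((1 - κ*γ) • (1 - (κ*γ) • P)⁻¹ * P))⁻¹
  rw [e1]
  have hne : (1:ℝ) - κ ≠ 0 := by have := hκ.2; linarith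
  rw [smul_add, smul_smul, smul_smul, ← add_assoc, ← add_smul]
  congr 2 <;> field_simp <;> ring
end

section
/- (Power series identity) For any policy π, κ ∈ [0,1], γ ∈ (0,1), and integer i ≥ 1: (ξ_κ D^π_κ P^π)^i = Σ_{t=i-1}^∞ binom(t, i-1) γ^{t+1} (1-κ)^i κ^{t-(i-1)} (P^π)^{t+1}, where ξ_κ = γ(1-κ)/(1-γκ) and D^π_κ = (1-κγ)(I-κγP^π)^{-1}. -/
/-!
Write `x = κγP`. Then `ξ_κ D^π_κ = γ(1-κ)(1 - x)⁻¹`, and since `x` commutes with `P`,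
`(ξ_κ D^π_κ P)^i = (γ(1-κ))^i (1 - x)^{-i} P^i`. As `‖x‖_∞ ≤ κγ < 1` for a stochastic `P`,
the negative binomial series `(1 - x)^{-i} = Σ_j binom(j+i-1, i-1) x^j` converges in the
`ℓ^∞` operator norm, and multiplying it out termwise gives the claim.
-/

attribute [local instance] Matrix.linftyOpNormedRing Matrix.linftyOpNormedAlgebra

theorem IsStochastic.norm_le_one {n : ℕ} {P : Matrix (Fin n) (Fin n) ℝ} (hP : IsStochastic P) :
    ‖P‖ ≤ 1 := by
  rw [Matrix.linfty_opNorm_def, NNReal.coe_le_one]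
  refine Finset.sup_le fun a _ => ?_
  rw [← NNReal.coe_le_coe]
  push_cast
  simp only [Real.norm_of_nonneg (hP.1 a _), hP.2 a, le_refl]

theorem Commute.ringInverse_one_sub_left {A : Type*} [NormedRing A] [CompleteSpace A] {x a : A}
    (hx : ‖x‖ < 1) (h : Commute x a) : Commute (Ring.inverse (1 - x)) a := by
  obtain ⟨u, hu⟩ := isUnit_one_sub_of_norm_lt_one hx
  rw [← hu, Ring.inverse_unit]
  exact (hu ▸ (Commute.one_left a).sub_left h).units_inv_left

theorem hasSum_choose_smul_pow_of_norm_smul_lt_one {A : Type*} [NormedRing A] [NormedAlgebra ℝ A]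
    [CompleteSpace A] {q : ℝ} {a : A} (h : ‖q • a‖ < 1) (k : ℕ) :
    HasSum (fun j : ℕ => (((j + k).choose k : ℝ) * q ^ j) • a ^ (j + (k + 1)))
      ((Ring.inverse (1 - q • a) * a) ^ (k + 1)) := by
  have hcomm := Commute.ringInverse_one_sub_left h ((Commute.refl a).smul_left q)
  rw [hcomm.mul_pow]
  refine ((hasSum_choose_mul_geometric_of_norm_lt_one' k h).mul_right (a ^ (k + 1))).congr_fun
    fun j => ?_
  rw [smul_pow, pow_add, mul_smul, Nat.cast_smul_eq_nsmul, nsmul_eq_mul, mul_assoc,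
    smul_mul_assoc]

/-- Power series identity: for `i ≥ 1`,
`(ξ_κ D^π_κ P^π)^i = Σ_{t=i-1}^∞ binom(t, i-1) γ^{t+1} (1-κ)^i κ^{t-(i-1)} (P^π)^{t+1}`
(reindexed with `t = j + i - 1`). -/
theorem stmt13 {n : ℕ} (γ κ : ℝ) (hγ : γ ∈ Set.Ioo (0:ℝ) 1) (hκ : κ ∈ Set.Icc (0:ℝ) 1)
    (P : Matrix (Fin n) (Fin n) ℝ) (hP : IsStochastic P) (i : ℕ) (hi : 1 ≤ i) :
    let ξ : ℝ := γ * (1-κ) / (1 - γ*κ)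
    let D : Matrix (Fin n) (Fin n) ℝ := (1 - κ*γ) • (1 - (κ*γ) • P)⁻¹
    (ξ • (D * P))^i
      = ∑' j : ℕ,
          (((j + i - 1).choose (i-1) : ℝ) * γ^(j+i) * (1-κ)^i * κ^j) • P^(j+i) := by
  intro ξ D
  obtain ⟨hγ0, hγ1⟩ := hγ
  obtain ⟨hκ0, hκ1⟩ := hκ
  obtain ⟨k, rfl⟩ := Nat.exists_eq_add_of_le' hi
  have hκγ : κ * γ < 1 := by nlinarith
  have hx : ‖(κ * γ) • P‖ < 1 := by
    rw [norm_smul, Real.norm_of_nonneg (by positivity)]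
    exact (mul_le_of_le_one_right (by positivity) hP.norm_le_one).trans_lt hκγ
  have hD : ξ • (D * P) = (γ * (1 - κ)) • (Ring.inverse (1 - (κ * γ) • P) * P) := by
    have : 1 - γ * κ ≠ 0 := by linarith [mul_comm γ κ]
    simp only [ξ, D, Matrix.nonsing_inv_eq_ringInverse, smul_mul_assoc, smul_smul]
    congr 1
    field_simp
  rw [hD, smul_pow, ← ((hasSum_choose_smul_pow_of_norm_smul_lt_one hx k).const_smul _).tsum_eq]
  refine tsum_congr fun j => ?_
  rw [smul_smul, Nat.add_sub_cancel, show j + (k + 1) - 1 = j + k by omega]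
  congr 1
  rw [mul_pow, mul_pow]
  ring
end

section
/- (PSDP-style error accumulation) If for all k, v* - v^{σ_k} ≤ ξ D^{π*}_κ P^{π*}(v* - v^{σ_{k-1}}) + δ̄_k component-wise, with ξ ∈ [0,1), D^{π*}_κ P^{π*} row-stochastic, ‖v* - v^{σ_0}‖_∞ ≤ R_max/(1-γ), and μ δ̄_i ≤ δ for a probability measure μ with μ(ξD^{π*}_κ P^{π*})^i ≤ c^{π*}(i)·ν scaled appropriately, then μ(v* - v^{σ_k}) ≤ Σ_{i=0}^{k-1} μ(ξ D^{π*}_κ P^{π*})^i δ̄_{k-i} + ξ^k R_max/(1-γ). -/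
open scoped Matrix
/-! The matrix `A = ξ B*` has nonnegative entries, so it is monotone, and unrolling
`e_{k+1} ≤ A e_k + d_{k+1}` gives `e_k ≤ ∑_{i<k} A^i d_{k-i} + A^k e_0`. Because `B*` is
stochastic, `A^k` maps the constant vector `R` to the constant vector `ξ^k R`, which bounds the
last term. Pairing with the probability vector `μ` keeps all of these inequalities. -/

namespace Matrix

variable {m R : Type*} [Fintype m] [CommSemiring R] [PartialOrder R] [IsOrderedRing R]

theorem mulVec_mono_of_nonneg {A : Matrix m m R} (hA : ∀ i j, 0 ≤ A i j) :
    Monotone A.mulVec :=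
  fun _ _ huv i => dotProduct_le_dotProduct_of_nonneg_left huv (hA i)

theorem le_sum_pow_mulVec_add_pow_mulVec [DecidableEq m] {A : Matrix m m R}
    (hA : ∀ i j, 0 ≤ A i j)
    {e d : ℕ → m → R} (h : ∀ k, e (k + 1) ≤ A *ᵥ e k + d (k + 1)) (k : ℕ) :
    e k ≤ ∑ i ∈ Finset.range k, (A ^ i) *ᵥ d (k - i) + (A ^ k) *ᵥ e 0 := by
  induction k with
  | zero => simp
  | succ k ih =>
    calc e (k + 1) ≤ A *ᵥ e k + d (k + 1) := h k
      _ ≤ A *ᵥ (∑ i ∈ Finset.range k, (A ^ i) *ᵥ d (k - i) + (A ^ k) *ᵥ e 0)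
          + d (k + 1) := by
        gcongr; exact mulVec_mono_of_nonneg hA ih
      _ = _ := by
        rw [Finset.sum_range_succ', mulVec_add, mulVec_sum]
        simp only [mulVec_mulVec, ← pow_succ', Nat.add_sub_add_right, pow_zero, one_mulVec,
          Nat.sub_zero]
        abel

theorem smul_pow_mulVec_le_of_mem_rowStochastic [DecidableEq m] {B : Matrix m m R}
    (hB : B ∈ rowStochastic R m)
    {ξ r : R} (hξ : 0 ≤ ξ) {v : m → R} (hv : v ≤ r • 1) (k : ℕ) :
    (ξ • B) ^ k *ᵥ v ≤ (ξ ^ k * r) • 1 := by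
  have hBk : B ^ k ∈ rowStochastic R m := pow_mem hB k
  calc (ξ • B) ^ k *ᵥ v = ξ ^ k • (B ^ k *ᵥ v) := by rw [smul_pow, smul_mulVec]
    _ ≤ ξ ^ k • (B ^ k *ᵥ (r • 1)) := by
      gcongr; exact mulVec_mono_of_nonneg (fun i j => hBk.1 i j) hv
    _ = (ξ ^ k * r) • 1 := by
      rw [mulVec_smul, one_vecMul_of_mem_rowStochastic hBk, smul_smul]

end Matrix

theorem IsStochastic.mem_rowStochastic {n : ℕ} {P : Matrix (Fin n) (Fin n) ℝ}
    (hP : IsStochastic P) : P ∈ Matrix.rowStochastic ℝ (Fin n) :=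
  Matrix.mem_rowStochastic_iff_sum.2 hP

theorem le_smul_one_of_norm_le {m : Type*} [Fintype m] {v : m → ℝ} {r : ℝ}
    (hv : ‖v‖ ≤ r) : v ≤ r • 1 := fun i => by
  simpa using (le_abs_self (v i)).trans ((norm_le_pi_norm v i).trans hv)

theorem stmt17_general {n : ℕ} (γ ξ Rmax : ℝ) (hξ : ξ ∈ Set.Ico (0:ℝ) 1)
    (Bstar : Matrix (Fin n) (Fin n) ℝ) (hBstar : IsStochastic Bstar)
    (μ : Fin n → ℝ) (hμ : (∀ s, 0 ≤ μ s) ∧ ∑ s, μ s = 1)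
    (vstar : Fin n → ℝ) (vσ : ℕ → Fin n → ℝ) (δbar : ℕ → Fin n → ℝ)
    (hrec : ∀ k, 1 ≤ k →
      vstar - vσ k ≤ (ξ • Bstar).mulVec (vstar - vσ (k-1)) + δbar k)
    (h0 : ‖vstar - vσ 0‖ ≤ Rmax / (1-γ)) :
    ∀ k, μ ⬝ᵥ (vstar - vσ k)
      ≤ (∑ i ∈ Finset.range k, μ ⬝ᵥ ((ξ • Bstar)^i).mulVec (δbar (k-i)))
        + ξ^k * (Rmax / (1-γ)) := by
  intro k
  have hA : ∀ i j, 0 ≤ (ξ • Bstar) i j := fun i j => mul_nonneg hξ.1 (hBstar.1 i j)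
  have hunroll :=
    Matrix.le_sum_pow_mulVec_add_pow_mulVec hA (e := fun k => vstar - vσ k)
      (fun k => by simpa using hrec (k + 1) (Nat.le_add_left 1 k)) k
  have htail := Matrix.smul_pow_mulVec_le_of_mem_rowStochastic hBstar.mem_rowStochastic hξ.1
    (le_smul_one_of_norm_le h0) k
  calc μ ⬝ᵥ (vstar - vσ k)
      ≤ μ ⬝ᵥ (∑ i ∈ Finset.range k, ((ξ • Bstar) ^ i) *ᵥ δbar (k - i)
          + (ξ • Bstar) ^ k *ᵥ (vstar - vσ 0)) :=
        dotProduct_le_dotProduct_of_nonneg_left hunroll hμ.1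
    _ ≤ μ ⬝ᵥ (∑ i ∈ Finset.range k, ((ξ • Bstar) ^ i) *ᵥ δbar (k - i)
          + (ξ ^ k * (Rmax / (1 - γ))) • 1) :=
        dotProduct_le_dotProduct_of_nonneg_left (add_le_add_right htail _) hμ.1
    _ = _ := by
      rw [dotProduct_add, dotProduct_sum, dotProduct_smul, dotProduct_one, hμ.2, smul_eq_mul,
        mul_one]

/-- PSDP-style error accumulation: if for all `k ≥ 1`,
`v* - v^{σ_k} ≤ ξ B* (v* - v^{σ_{k-1}}) + δ̄_k` component-wise, with `B* = D^{π*}_κ P^{π*}`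
row-stochastic, `ξ ∈ [0,1)`, `‖v* - v^{σ_0}‖_∞ ≤ R_max/(1-γ)`, `μ δ̄_i ≤ δ` for the probability
vector `μ`, and `μ (ξ B*)^i ≤ c(i) ν`, then
`μ(v* - v^{σ_k}) ≤ Σ_{i=0}^{k-1} μ (ξ B*)^i δ̄_{k-i} + ξ^k R_max/(1-γ)`. -/
theorem stmt17 {n : ℕ} (γ ξ Rmax δ : ℝ) (hγ : γ ∈ Set.Ioo (0:ℝ) 1) (hξ : ξ ∈ Set.Ico (0:ℝ) 1)
    (Bstar : Matrix (Fin n) (Fin n) ℝ) (hBstar : IsStochastic Bstar)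
    (μ ν : Fin n → ℝ) (hμ : (∀ s, 0 ≤ μ s) ∧ ∑ s, μ s = 1)
    (hν : (∀ s, 0 ≤ ν s) ∧ ∑ s, ν s = 1)
    (c : ℕ → ℝ) (hc : ∀ i, Matrix.vecMul μ ((ξ • Bstar)^i) ≤ c i • ν)
    (vstar : Fin n → ℝ) (vσ : ℕ → Fin n → ℝ) (δbar : ℕ → Fin n → ℝ)
    (hrec : ∀ k, 1 ≤ k →
      vstar - vσ k ≤ (ξ • Bstar).mulVec (vstar - vσ (k-1)) + δbar k)
    (h0 : ‖vstar - vσ 0‖ ≤ Rmax / (1-γ))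
    (hδ : ∀ i, μ ⬝ᵥ δbar i ≤ δ) :
    ∀ k, μ ⬝ᵥ (vstar - vσ k)
      ≤ (∑ i ∈ Finset.range k, μ ⬝ᵥ ((ξ • Bstar)^i).mulVec (δbar (k-i)))
        + ξ^k * (Rmax / (1-γ)) :=
  stmt17_general γ ξ Rmax hξ Bstar hBstar μ hμ vstar vσ δbar hrec h0
end

section
/- If μ is a probability row vector, {c(i)} satisfies μ(P^{π_1}⋯P^{π_i}) ≤ c(i)ν for all deterministic policy sequences, and δ̄ ∈ ℝ^{|S|}_{≥0} satisfies νδ̄ ≤ δ, then for any policy π: μ(I - γP^π)^{-1}δ̄ ≤ (Σ_{l=0}^∞ γ^l c(l)) δ = (C^{(1)}(μ,ν)/(1-γ)) δ, where C^{(1)}(μ,ν) = (1-γ)Σ_{l=0}^∞ γ^l c(l). -/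
open scoped Matrix

lemma vecMul_prob {n : ℕ} (μ : Fin n → ℝ) (hμ0 : ∀ s, 0 ≤ μ s) (hμ1 : ∑ s, μ s = 1)
    (P : Matrix (Fin n) (Fin n) ℝ) (hP : IsStochastic P) :
    (∀ s, 0 ≤ Matrix.vecMul μ P s) ∧ ∑ s, Matrix.vecMul μ P s = 1 := by
  constructor
  · intro s
    simp only [Matrix.vecMul, dotProduct]
    exact Finset.sum_nonneg fun i _ => mul_nonneg (hμ0 i) (hP.1 i s)
  · simp only [Matrix.vecMul, dotProduct]
    rw [Finset.sum_comm]
    calc ∑ i, ∑ s, μ i * P i s = ∑ i, μ i * ∑ s, P i s := by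
          simp_rw [Finset.mul_sum]
      _ = 1 := by simp_rw [hP.2]; simpa using hμ1

/-- If `μ P^{π₁} ⋯ P^{π_i} ≤ c(i) ν` for all sequences of stochastic transition matrices, and
`δ̄ ≥ 0` with `ν δ̄ ≤ δ`, then for any policy matrix `P^π`:
`μ (I - γ P^π)⁻¹ δ̄ ≤ (Σ_{l=0}^∞ γ^l c(l)) δ = (C^{(1)}(μ,ν)/(1-γ)) δ`. -/
theorem stmt19 {n : ℕ} (γ δ : ℝ) (hγ : γ ∈ Set.Ioo (0:ℝ) 1)
    (μ ν : Fin n → ℝ) (hμ : (∀ s, 0 ≤ μ s) ∧ ∑ s, μ s = 1)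
    (hν : (∀ s, 0 ≤ ν s) ∧ ∑ s, ν s = 1)
    (c : ℕ → ℝ)
    (hc : ∀ L : List (Matrix (Fin n) (Fin n) ℝ), (∀ Q ∈ L, IsStochastic Q) →
      Matrix.vecMul μ L.prod ≤ c L.length • ν)
    (hsum : Summable (fun l : ℕ => γ^l * c l))
    (δbar : Fin n → ℝ) (hδ0 : 0 ≤ δbar) (hδ : ν ⬝ᵥ δbar ≤ δ)
    (P : Matrix (Fin n) (Fin n) ℝ) (hP : IsStochastic P) :
    μ ⬝ᵥ (1 - γ • P)⁻¹.mulVec δbar ≤ (∑' l : ℕ, γ^l * c l) * δ := by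
  obtain ⟨hγ0, hγ1⟩ := hγ
  -- μ P^l is a probability vector
  have hprob : ∀ l : ℕ, (∀ s, 0 ≤ Matrix.vecMul μ (P ^ l) s) ∧
      ∑ s, Matrix.vecMul μ (P ^ l) s = 1 := by
    intro l
    induction l with
    | zero => simpa using hμ
    | succ k ih =>
        have := vecMul_prob (Matrix.vecMul μ (P ^ k)) ih.1 ih.2 P hP
        simpa [pow_succ, Matrix.vecMul_vecMul] using this
  -- bound from hc for powers
  have hcpow : ∀ l : ℕ, Matrix.vecMul μ (P ^ l) ≤ c l • ν := by
    intro l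
    have := hc (List.replicate l P) (by
      intro Q hQ
      rw [List.eq_of_mem_replicate hQ]; exact hP)
    simpa [List.prod_replicate] using this
  have hcl : ∀ l, (0:ℝ) ≤ c l := by
    intro l
    have h1 : ∑ s, Matrix.vecMul μ (P ^ l) s ≤ ∑ s, (c l • ν) s :=
      Finset.sum_le_sum fun s _ => hcpow l s
    have h2 : ∑ s, (c l • ν) s = c l := by
      simp [← Finset.mul_sum, hν.2]
    rw [(hprob l).2, h2] at h1
    linarith
  have hδpos : 0 ≤ δ := le_trans (Finset.sum_nonneg fun s _ =>
    mul_nonneg (hν.1 s) (hδ0 s)) hδ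
  set A : Matrix (Fin n) (Fin n) ℝ := 1 - γ • P with hA
  -- stochastic matrices are sup-norm contractions
  have hcontr : ∀ x : Fin n → ℝ, ‖P.mulVec x‖ ≤ ‖x‖ := by
    intro x
    refine pi_norm_le_iff_of_nonneg (norm_nonneg x) |>.2 fun i => ?_
    simp only [Matrix.mulVec, dotProduct]
    calc ‖∑ j, P i j * x j‖ ≤ ∑ j, ‖P i j * x j‖ := norm_sum_le _ _
      _ ≤ ∑ j, P i j * ‖x‖ := by
          refine Finset.sum_le_sum fun j _ => ?_
          rw [norm_mul]
          exact mul_le_mul (by rw [Real.norm_eq_abs, abs_of_nonneg (hP.1 i j)])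
            (norm_le_pi_norm x j) (norm_nonneg _) (hP.1 i j)
      _ = ‖x‖ := by rw [← Finset.sum_mul, hP.2 i, one_mul]
  -- kernel of A is trivial
  have hker : ∀ x : Fin n → ℝ, A.mulVec x = 0 → x = 0 := by
    intro x hx
    have hx' : x = γ • P.mulVec x := by
      have h0 : x - γ • P.mulVec x = 0 := by
        simpa [hA, Matrix.sub_mulVec, Matrix.one_mulVec, Matrix.smul_mulVec] using hx
      exact sub_eq_zero.mp h0
    have hnorm : ‖x‖ ≤ γ * ‖x‖ := by
      calc ‖x‖ = ‖γ • P.mulVec x‖ := by rw [← hx']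
        _ = γ * ‖P.mulVec x‖ := by rw [norm_smul, Real.norm_eq_abs, abs_of_pos hγ0]
        _ ≤ γ * ‖x‖ := mul_le_mul_of_nonneg_left (hcontr x) (le_of_lt hγ0)
    have h0 : ‖x‖ = 0 := by nlinarith [norm_nonneg x]
    exact norm_eq_zero.mp h0
  have hinj : Function.Injective A.mulVec := by
    intro a b hab
    have h0 : A.mulVec (a - b) = 0 := by rw [Matrix.mulVec_sub, hab, sub_self]
    exact sub_eq_zero.mp (hker _ h0)
  have hunit : IsUnit A := Matrix.mulVec_injective_iff_isUnit.mp hinj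
  have hdet : IsUnit A.det := (Matrix.isUnit_iff_isUnit_det A).mp hunit
  set y : Fin n → ℝ := A⁻¹.mulVec δbar with hy
  have hAy : A.mulVec y = δbar := by
    rw [hy, Matrix.mulVec_mulVec, Matrix.mul_nonsing_inv A hdet, Matrix.one_mulVec]
  have hfix : y = δbar + γ • P.mulVec y := by
    have : y - γ • P.mulVec y = δbar := by
      calc y - γ • P.mulVec y = A.mulVec y := by
            simp [hA, Matrix.sub_mulVec, Matrix.one_mulVec, Matrix.smul_mulVec]
        _ = δbar := hAy
    exact sub_eq_iff_eq_add.mp this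
  -- unrolled identity
  have key : ∀ k : ℕ, μ ⬝ᵥ y = (∑ l ∈ Finset.range k, γ ^ l * (Matrix.vecMul μ (P ^ l) ⬝ᵥ δbar))
      + γ ^ k * (Matrix.vecMul μ (P ^ k) ⬝ᵥ y) := by
    intro k
    induction k with
    | zero => simp [Matrix.vecMul_one]
    | succ k ih =>
        rw [ih, Finset.sum_range_succ]
        have hstep : Matrix.vecMul μ (P ^ k) ⬝ᵥ y
            = Matrix.vecMul μ (P ^ k) ⬝ᵥ δbar + γ * (Matrix.vecMul μ (P ^ (k+1)) ⬝ᵥ y) := by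
          conv_lhs => rw [hfix]
          rw [dotProduct_add, dotProduct_smul]
          congr 1
          rw [smul_eq_mul]
          congr 1
          rw [Matrix.dotProduct_mulVec, Matrix.vecMul_vecMul, ← pow_succ]
        rw [hstep]
        ring
  -- termwise bound
  have hterm : ∀ l : ℕ, Matrix.vecMul μ (P ^ l) ⬝ᵥ δbar ≤ c l * δ := by
    intro l
    calc Matrix.vecMul μ (P ^ l) ⬝ᵥ δbar ≤ (c l • ν) ⬝ᵥ δbar := by
          refine Finset.sum_le_sum fun s _ => ?_
          exact mul_le_mul_of_nonneg_right (hcpow l s) (hδ0 s)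
      _ = c l * (ν ⬝ᵥ δbar) := by rw [smul_dotProduct, smul_eq_mul]
      _ ≤ c l * δ := mul_le_mul_of_nonneg_left hδ (hcl l)
  -- partial sums bounded by the tsum
  have hsum' : Summable (fun l : ℕ => γ ^ l * c l * δ) := hsum.mul_right δ
  have hSk : ∀ k : ℕ, (∑ l ∈ Finset.range k, γ ^ l * (Matrix.vecMul μ (P ^ l) ⬝ᵥ δbar))
      ≤ (∑' l : ℕ, γ ^ l * c l) * δ := by
    intro k
    calc (∑ l ∈ Finset.range k, γ ^ l * (Matrix.vecMul μ (P ^ l) ⬝ᵥ δbar))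
        ≤ ∑ l ∈ Finset.range k, γ ^ l * c l * δ := by
          refine Finset.sum_le_sum fun l _ => ?_
          rw [mul_assoc]
          exact mul_le_mul_of_nonneg_left (hterm l) (pow_nonneg (le_of_lt hγ0) l)
      _ ≤ ∑' l : ℕ, γ ^ l * c l * δ := by
          refine Summable.sum_le_tsum _ (fun l _ => ?_) hsum'
          exact mul_nonneg (mul_nonneg (pow_nonneg (le_of_lt hγ0) l) (hcl l)) hδpos
      _ = (∑' l : ℕ, γ ^ l * c l) * δ := tsum_mul_right
  -- tail bound
  have htail : ∀ k : ℕ, Matrix.vecMul μ (P ^ k) ⬝ᵥ y ≤ ‖y‖ := by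
    intro k
    calc Matrix.vecMul μ (P ^ k) ⬝ᵥ y ≤ ∑ s, Matrix.vecMul μ (P ^ k) s * ‖y‖ := by
          refine Finset.sum_le_sum fun s _ => ?_
          exact mul_le_mul_of_nonneg_left
            (le_trans (le_abs_self _) (norm_le_pi_norm y s)) ((hprob k).1 s)
      _ = ‖y‖ := by rw [← Finset.sum_mul, (hprob k).2, one_mul]
  have hbound : ∀ k : ℕ, μ ⬝ᵥ y ≤ (∑' l : ℕ, γ ^ l * c l) * δ + γ ^ k * ‖y‖ := by
    intro k
    rw [key k]
    have := mul_le_mul_of_nonneg_left (htail k) (pow_nonneg (le_of_lt hγ0) k)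
    linarith [hSk k]
  have hlim : Filter.Tendsto (fun k : ℕ => (∑' l : ℕ, γ ^ l * c l) * δ + γ ^ k * ‖y‖)
      Filter.atTop (nhds ((∑' l : ℕ, γ ^ l * c l) * δ + 0 * ‖y‖)) := by
    exact Filter.Tendsto.const_add _
      ((tendsto_pow_atTop_nhds_zero_of_lt_one (le_of_lt hγ0) hγ1).mul_const _)
  have : μ ⬝ᵥ y ≤ (∑' l : ℕ, γ ^ l * c l) * δ + 0 * ‖y‖ := ge_of_tendsto' hlim hbound
  simpa using this
end
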